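/- arXiv:math/0301279 — 8 statements merged into one kernel-verified Lean document; each statement's English description precedes it below -/
import Mathlib

section
/- Let p be a prime and 1 ≤ i < j. Then the images of the polynomials Φ_i = ∑_{k=0}^{p-1} (1+X)^{k·p^{i-1}} and Φ_j = ∑_{k=0}^{p-1} (1+X)^{k·p^{j-1}} in the power series ring ℤ_(p)⟦X⟧ are not associated elements. -/
open Polynomial in
lemma phi_mod_p' (p : ℕ) [Fact p.Prime] (i : ℕ) :
    (∑ k ∈ Finset.range p, ((1 : (ZMod p)[X]) + X) ^ (k * p ^ (i - 1)))
      = X ^ ((p - 1) * p ^ (i - 1)) := by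
  have hp : p.Prime := Fact.out
  have h1 : ∀ k : ℕ, ((1 : (ZMod p)[X]) + X) ^ (k * p ^ (i-1)) = (1 + X ^ (p ^ (i-1))) ^ k := by
    intro k
    rw [mul_comm, pow_mul, add_pow_char_pow, one_pow]
  have hx : (X : (ZMod p)[X]) ^ (p ^ (i-1)) ≠ 0 := pow_ne_zero _ X_ne_zero
  apply mul_right_cancel₀ hx
  simp only [h1]
  have := geom_sum_mul (1 + X ^ (p ^ (i-1)) : (ZMod p)[X]) p
  simp only [add_sub_cancel_left] at this
  rw [this, add_pow_char, one_pow, add_sub_cancel_left, ← pow_mul, ← pow_add]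
  congr 1
  symm
  calc (p-1) * p^(i-1) + p^(i-1) = ((p-1)+1) * p^(i-1) := by ring
    _ = p * p^(i-1) := by rw [Nat.sub_add_cancel hp.one_le]
    _ = p^(i-1) * p := mul_comm _ _

/-- The ideal `(p) ⊆ ℤ` is prime for a prime number `p`. -/
instance span_p_isPrime (p : ℕ) [Fact p.Prime] : (Ideal.span {(p : ℤ)}).IsPrime :=
  (Ideal.span_singleton_prime (by exact_mod_cast (Fact.out : p.Prime).ne_zero)).mpr
    (Nat.prime_iff_prime_int.mp Fact.out)

/-- `ℤ_(p)`, the localization of `ℤ` at the prime ideal `(p)`. -/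
abbrev Zp (p : ℕ) [Fact p.Prime] : Type :=
  Localization.AtPrime (Ideal.span {(p : ℤ)})

open Polynomial in
/-- The polynomial `Φ_i = ∑_{k=0}^{p-1} (1+X)^{k·p^{i-1}}` in `ℤ[X]`. -/
noncomputable def Phi (p i : ℕ) : Polynomial ℤ :=
  ∑ k ∈ Finset.range p, (1 + X) ^ (k * p ^ (i - 1))

/-- The image of `Φ_i` in the power series ring `ℤ_(p)⟦X⟧`. -/
noncomputable def PhiSeries (p : ℕ) [Fact p.Prime] (i : ℕ) : PowerSeries (Zp p) :=
  ((Phi p i).map (Int.castRingHom (Zp p)) : PowerSeries (Zp p))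

/-- Residue map `ℤ_(p) → ℤ/p`. -/
noncomputable def resMap (p : ℕ) [Fact p.Prime] : Zp p →+* ZMod p :=
  IsLocalization.lift (M := (Ideal.span {(p : ℤ)}).primeCompl) (g := Int.castRingHom (ZMod p))
    (by
      rintro ⟨y, hy⟩
      have hdvd : ¬ ((p : ℤ) ∣ y) := fun hd => hy (Ideal.mem_span_singleton.mpr hd)
      have : ((y : ℤ) : ZMod p) ≠ 0 := by
        rwa [Ne, ZMod.intCast_zmod_eq_zero_iff_dvd]
      simpa using this.isUnit)

lemma resMap_comp (p : ℕ) [Fact p.Prime] :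
    (resMap p).comp (Int.castRingHom (Zp p)) = Int.castRingHom (ZMod p) :=
  RingHom.ext_int _ _

open PowerSeries in
lemma map_phiSeries (p : ℕ) [Fact p.Prime] (i : ℕ) :
    PowerSeries.map (resMap p) (PhiSeries p i)
      = (X : PowerSeries (ZMod p)) ^ ((p - 1) * p ^ (i - 1)) := by
  have h1 : PowerSeries.map (resMap p) (PhiSeries p i)
      = (((Phi p i).map (Int.castRingHom (ZMod p)) : Polynomial (ZMod p)) :
          PowerSeries (ZMod p)) := by
    ext n
    simp only [PhiSeries, PowerSeries.coeff_map, Polynomial.coeff_coe, Polynomial.coeff_map]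
    rw [← RingHom.comp_apply, resMap_comp]
  rw [h1]
  have h2 : (Phi p i).map (Int.castRingHom (ZMod p))
      = Polynomial.X ^ ((p - 1) * p ^ (i - 1)) := by
    rw [Phi, Polynomial.map_sum]
    simpa using phi_mod_p' p i
  rw [h2]
  push_cast
  rfl

/-- For `1 ≤ i < j`, the images of `Φ_i` and `Φ_j` in `ℤ_(p)⟦X⟧` are not associated. -/
theorem phiSeries_not_associated (p : ℕ) [Fact p.Prime] (i j : ℕ)
    (hi : 1 ≤ i) (hij : i < j) :
    ¬ Associated (PhiSeries p i) (PhiSeries p j) := by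
  intro h
  have hp : p.Prime := Fact.out
  have h2 : Associated (PowerSeries.map (resMap p) (PhiSeries p i))
      (PowerSeries.map (resMap p) (PhiSeries p j)) :=
    h.map (PowerSeries.map (resMap p)).toMonoidHom
  rw [map_phiSeries, map_phiSeries] at h2
  obtain ⟨u, hu⟩ := h2
  have horder := congrArg PowerSeries.order hu
  rw [PowerSeries.order_mul, PowerSeries.order_X_pow, PowerSeries.order_X_pow,
    PowerSeries.order_zero_of_unit u.isUnit, add_zero] at horder
  have : (p - 1) * p ^ (i - 1) = (p - 1) * p ^ (j - 1) := by exact_mod_cast horder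
  have hlt : p ^ (i - 1) < p ^ (j - 1) :=
    Nat.pow_lt_pow_right hp.one_lt (by omega)
  have hp1 : 0 < p - 1 := by have := hp.one_lt; omega
  nlinarith [this, hlt, hp1]
end

section
/- Let p be a prime, r ≥ 1 and 0 ≤ i < r. Then the image of Φ_r = ∑_{k=0}^{p-1} (1+X)^{k·p^{r-1}} in ℤ_(p)⟦X⟧ does not divide (1+X)^{p^i} − 1 in ℤ_(p)⟦X⟧. -/
/- ### Auxiliary material -/

lemma aux_map_coe {R S : Type*} [CommRing R] [CommRing S] (f : R →+* S) (q : Polynomial R) :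
    PowerSeries.map f (q : PowerSeries R) = ((q.map f : Polynomial S) : PowerSeries S) := by
  ext n
  simp [PowerSeries.coeff_map, Polynomial.coeff_coe]

instance aux_charP_powerSeries (p : ℕ) [Fact p.Prime] : CharP (PowerSeries (ZMod p)) p :=
  charP_of_injective_ringHom (f := PowerSeries.C (R := ZMod p)) (by
    intro a b h
    simpa using congrArg (PowerSeries.constantCoeff (R := ZMod p)) h) p

/-- The residue ring hom `ℤ_(p) →+* ZMod p`. -/
noncomputable def psi (p : ℕ) [Fact p.Prime] : Zp p →+* ZMod p :=
  IsLocalization.lift (M := (Ideal.span {(p:ℤ)}).primeCompl) (g := Int.castRingHom (ZMod p))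
    (by
      intro y
      have hy : (y : ℤ) ∉ Ideal.span {(p : ℤ)} := y.2
      rw [Ideal.mem_span_singleton] at hy
      have : ((y : ℤ) : ZMod p) ≠ 0 := by
        rwa [Ne, ZMod.intCast_zmod_eq_zero_iff_dvd]
      simpa using this.isUnit)

lemma psi_comp (p : ℕ) [Fact p.Prime] :
    (psi p).comp (Int.castRingHom (Zp p)) = Int.castRingHom (ZMod p) := by
  apply RingHom.ext_int

/-- The geometric-sum identity for `Φ_r` over any commutative ring. -/
lemma phi_mul_int (p r : ℕ) (hr : 1 ≤ r) :
    Phi p r * ((1 + Polynomial.X) ^ (p ^ (r-1)) - 1)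
      = (1 + Polynomial.X : Polynomial ℤ) ^ (p ^ r) - 1 := by
  have h := geom_sum_mul ((1 + Polynomial.X : Polynomial ℤ) ^ (p ^ (r-1))) p
  have hPhi : Phi p r = ∑ k ∈ Finset.range p,
      ((1 + Polynomial.X : Polynomial ℤ) ^ (p ^ (r-1))) ^ k := by
    unfold Phi
    refine Finset.sum_congr rfl fun k _ => ?_
    rw [← pow_mul, mul_comm]
  rw [hPhi, h, ← pow_mul]
  congr 2
  rw [← pow_succ]
  congr 1
  omega

/-- Image of `PhiSeries` in `(ZMod p)⟦X⟧`. -/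
noncomputable def PhiBar (p : ℕ) [Fact p.Prime] (r : ℕ) : PowerSeries (ZMod p) :=
  PowerSeries.map (psi p) (PhiSeries p r)

lemma phiBar_eq (p r : ℕ) [Fact p.Prime] :
    PhiBar p r = (((Phi p r).map (Int.castRingHom (ZMod p)) : Polynomial (ZMod p))
      : PowerSeries (ZMod p)) := by
  unfold PhiBar PhiSeries
  rw [aux_map_coe, Polynomial.map_map, psi_comp]

lemma one_add_X_pow_char (p : ℕ) [Fact p.Prime] (j : ℕ) :
    (1 + PowerSeries.X : PowerSeries (ZMod p)) ^ (p ^ j)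
      = 1 + PowerSeries.X ^ (p ^ j) := by
  rw [add_pow_char_pow, one_pow]

/-- The key identity `Φ̄_r · X^{p^{r-1}} = X^{p^r}` in `(ZMod p)⟦X⟧`. -/
lemma phiBar_mul (p r : ℕ) [Fact p.Prime] (hr : 1 ≤ r) :
    PhiBar p r * PowerSeries.X ^ (p ^ (r-1)) = (PowerSeries.X : PowerSeries (ZMod p)) ^ (p ^ r) := by
  have h := congrArg (fun q : Polynomial ℤ =>
      ((q.map (Int.castRingHom (ZMod p)) : Polynomial (ZMod p)) : PowerSeries (ZMod p)))
    (phi_mul_int p r hr)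
  simp only [Polynomial.map_mul, Polynomial.map_sub, Polynomial.map_pow, Polynomial.map_add,
    Polynomial.map_one, Polynomial.map_X, Polynomial.coe_mul, Polynomial.coe_sub,
    Polynomial.coe_pow, Polynomial.coe_add, Polynomial.coe_one, Polynomial.coe_X] at h
  rw [phiBar_eq]
  rw [one_add_X_pow_char p (r-1), one_add_X_pow_char p r] at h
  simpa using h

lemma phiBar_ne_zero (p r : ℕ) [Fact p.Prime] (hr : 1 ≤ r) : PhiBar p r ≠ 0 := by
  intro h
  have := phiBar_mul p r hr
  rw [h, zero_mul] at this
  exact (pow_ne_zero _ PowerSeries.X_ne_zero) this.symm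

lemma constantCoeff_phiSeries (p r : ℕ) [Fact p.Prime] :
    PowerSeries.constantCoeff (R := Zp p) (PhiSeries p r) = (p : Zp p) := by
  unfold PhiSeries Phi
  rw [← PowerSeries.coeff_zero_eq_constantCoeff_apply, Polynomial.coeff_coe,
    Polynomial.coeff_map, Polynomial.coeff_zero_eq_eval_zero, Polynomial.eval_finset_sum]
  simp

/-- For `0 ≤ i < r`, the image of `Φ_r` in `ℤ_(p)⟦X⟧` does not divide
`(1+X)^{p^i} − 1`. -/
theorem phiSeries_not_dvd_euler (p r i : ℕ) [Fact p.Prime] (hr : 1 ≤ r) (hi : i < r) :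
    ¬ (PhiSeries p r ∣ ((1 + PowerSeries.X : PowerSeries (Zp p)) ^ (p ^ i) - 1)) := by
  intro hdvd
  have hp : p.Prime := Fact.out
  -- Push to (ZMod p)⟦X⟧
  have hdvd' : PhiBar p r ∣ (PowerSeries.X : PowerSeries (ZMod p)) ^ (p ^ i) := by
    have := map_dvd (PowerSeries.map (psi p)) hdvd
    simp only [map_sub, map_pow, map_add, map_one, PowerSeries.map_X] at this
    rw [one_add_X_pow_char p i] at this
    simpa [PhiBar] using this
  obtain ⟨g, hg⟩ := hdvd'
  -- order comparison : p^r ≤ p^(r-1) + p^i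
  have hXdvd : (PowerSeries.X : PowerSeries (ZMod p)) ^ (p ^ r)
      ∣ PowerSeries.X ^ (p ^ (r-1) + p ^ i) := by
    rw [← phiBar_mul p r hr, pow_add]
    exact ⟨g, by rw [hg]; ring⟩
  have hle : p ^ r ≤ p ^ (r-1) + p ^ i := by
    by_contra hlt
    push_neg at hlt
    rw [PowerSeries.X_pow_dvd_iff] at hXdvd
    have := hXdvd _ hlt
    simp at this
  have hi' : i ≤ r - 1 := by omega
  have hle2 : p ^ i ≤ p ^ (r-1) := Nat.pow_le_pow_right hp.pos hi'
  have hpr : p ^ r = p ^ (r-1) * p := by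
    conv_lhs => rw [show r = (r-1) + 1 by omega]
    rw [pow_succ]
  have hpos : 0 < p ^ (r-1) := Nat.pow_pos hp.pos
  have hp2 : p = 2 := by
    have h2 : p ^ (r-1) * p ≤ p ^ (r-1) * 2 := by omega
    have h3 := Nat.le_of_mul_le_mul_left h2 hpos
    have := hp.two_le
    omega
  subst hp2
  have hir : i = r - 1 := by
    have h2 : 2 ^ (r-1) ≤ 2 ^ i := by omega
    have := Nat.pow_le_pow_iff_right (one_lt_two) |>.mp h2
    omega
  subst hir
  -- now `PhiSeries 2 r = 1 + (1+X)^(2^(r-1))`, so it divides `2`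
  have hPhiS : PhiSeries 2 r
      = 1 + (1 + PowerSeries.X : PowerSeries (Zp 2)) ^ (2 ^ (r-1)) := by
    unfold PhiSeries Phi
    rw [Finset.sum_range_succ, Finset.sum_range_one]
    simp
  have hdvd2 : PhiSeries 2 r ∣ (2 : PowerSeries (Zp 2)) := by
    have := dvd_sub (dvd_refl (PhiSeries 2 r)) hdvd
    rw [hPhiS] at this ⊢
    convert this using 1
    ring
  obtain ⟨g, hg2⟩ := hdvd2
  -- map to (ZMod 2)⟦X⟧ : the image of g must vanish
  have hmap : PhiBar 2 r * PowerSeries.map (psi 2) g = 0 := by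
    unfold PhiBar
    rw [← map_mul, ← hg2, map_ofNat]
    exact_mod_cast CharP.cast_eq_zero (PowerSeries (ZMod 2)) 2
  have hg0 : PowerSeries.map (psi 2) g = 0 := by
    rcases mul_eq_zero.mp hmap with h | h
    · exact absurd h (phiBar_ne_zero 2 r hr)
    · exact h
  -- compare constant coefficients
  have hc : (2 : Zp 2) = 2 * PowerSeries.constantCoeff (R := Zp 2) g := by
    have := congrArg (PowerSeries.constantCoeff (R := Zp 2)) hg2
    rw [map_mul, constantCoeff_phiSeries] at this
    simpa [map_ofNat] using this
  have h2ne : (2 : Zp 2) ≠ 0 := by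
    have hinj := IsLocalization.injective (M := (Ideal.span {((2:ℕ):ℤ)}).primeCompl) (Zp 2)
      (Ideal.primeCompl_le_nonZeroDivisors _)
    intro h
    have : ((2:ℤ) : Zp 2) = ((0:ℤ) : Zp 2) := by
      rw [show ((2:ℤ):Zp 2) = (2:Zp 2) by norm_cast, h]; norm_cast
    have h02 : algebraMap ℤ (Zp 2) 2 = algebraMap ℤ (Zp 2) 0 := by
      simpa [map_ofNat] using this
    exact (by norm_num : (2:ℤ) ≠ 0) (hinj h02)
  have hg1 : PowerSeries.constantCoeff (R := Zp 2) g = 1 := by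
    have h : (2 : Zp 2) * 1 = 2 * PowerSeries.constantCoeff (R := Zp 2) g := by
      rw [mul_one]; exact hc
    exact (mul_left_cancel₀ h2ne h).symm
  -- contradiction : psi 2 sends this constant coefficient to 0 and to 1
  have hz : psi 2 (PowerSeries.coeff (R := Zp 2) 0 g) = 0 := by
    simpa [PowerSeries.coeff_map] using congrArg (PowerSeries.coeff (R := ZMod 2) 0) hg0
  rw [PowerSeries.coeff_zero_eq_constantCoeff_apply, hg1, map_one] at hz
  exact one_ne_zero hz
end

section
/- Let p be a prime and r ≥ 1. Let S be the submonoid of ℤ_(p)⟦X⟧ generated by the elements (1+X)^{p^i} − 1 for 0 ≤ i ≤ r − 1. Then no element of S is divisible by (1+X)^{p^r} − 1; equivalently, S is disjoint from the ideal of ℤ_(p)⟦X⟧ generated by (1+X)^{p^r} − 1. -/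
open PowerSeries Polynomial

section EvalNil

variable {R B : Type*} [CommRing R] [CommRing B]

lemma eval₂_eq_sum_range_of_pow_eq_zero (c : R →+* B) {a : B} {n : ℕ} (ha : a ^ n = 0)
    (q : R[X]) : q.eval₂ c a = ∑ i ∈ Finset.range n, c (q.coeff i) * a ^ i := by
  rw [Polynomial.eval₂_eq_sum_range' c
    (show q.natDegree < max n (q.natDegree + 1) from
      lt_of_lt_of_le (Nat.lt_succ_self _) (le_max_right _ _)) a]
  refine (Finset.sum_subset (Finset.range_subset_range.mpr (le_max_left _ _)) ?_).symm
  intro i _ hi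
  have h1 : n ≤ i := le_of_not_gt fun h => hi (Finset.mem_range.mpr h)
  obtain ⟨k, rfl⟩ := Nat.exists_eq_add_of_le h1
  rw [pow_add, ha, zero_mul, mul_zero]

lemma trunc_eval₂_eq_sum (c : R →+* B) {a : B} {n : ℕ} (ha : a ^ n = 0) (f : PowerSeries R) :
    (trunc n f).eval₂ c a = ∑ i ∈ Finset.range n, c (PowerSeries.coeff i f) * a ^ i := by
  rw [eval₂_eq_sum_range_of_pow_eq_zero c ha]
  refine Finset.sum_congr rfl fun i hi => ?_
  rw [coeff_trunc, if_pos (Finset.mem_range.mp hi)]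

lemma trunc_eval₂_coe (c : R →+* B) {a : B} {n : ℕ} (ha : a ^ n = 0) (q : R[X]) :
    (trunc n (q : PowerSeries R)).eval₂ c a = q.eval₂ c a := by
  rw [trunc_eval₂_eq_sum c ha, eval₂_eq_sum_range_of_pow_eq_zero c ha]
  exact Finset.sum_congr rfl fun i _ => by rw [Polynomial.coeff_coe]

/-- Evaluation of a power series at a nilpotent element `a` with `a ^ n = 0`. -/
noncomputable def evalNilHom (c : R →+* B) (a : B) (n : ℕ) (ha : a ^ n = 0) :
    PowerSeries R →+* B where
  toFun f := (trunc (n + 2) f).eval₂ c a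
  map_one' := by
    show (trunc (n + 2) (1 : PowerSeries R)).eval₂ c a = 1
    rw [trunc_one, eval₂_one]
  map_zero' := by
    show (trunc (n + 2) (0 : PowerSeries R)).eval₂ c a = 0
    rw [map_zero, eval₂_zero]
  map_add' f g := by
    show (trunc (n + 2) (f + g)).eval₂ c a = (trunc (n + 2) f).eval₂ c a + (trunc (n + 2) g).eval₂ c a
    rw [map_add, eval₂_add]
  map_mul' f g := by
    have ha2 : a ^ (n + 2) = 0 := by
      rw [pow_add, ha, zero_mul]
    calc (trunc (n + 2) (f * g)).eval₂ c a
        = (trunc (n + 2) ((trunc (n + 2) f * trunc (n + 2) g : R[X]) :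
            PowerSeries R)).eval₂ c a := by
          rw [Polynomial.coe_mul, trunc_trunc_mul_trunc]
      _ = (trunc (n + 2) f * trunc (n + 2) g).eval₂ c a := trunc_eval₂_coe c ha2 _
      _ = (trunc (n + 2) f).eval₂ c a * (trunc (n + 2) g).eval₂ c a := by rw [eval₂_mul]

lemma evalNilHom_X (c : R →+* B) (a : B) (n : ℕ) (ha : a ^ n = 0) :
    evalNilHom c a n ha PowerSeries.X = a := by
  show (trunc (n + 2) PowerSeries.X).eval₂ c a = a
  rw [trunc_X, Polynomial.eval₂_X]

end EvalNil

section Cyclo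

variable (p r : ℕ) [Fact p.Prime]

/-- Helper facts about `B = ℤ[ζ_{p^r}]`. -/
lemma cyclo_facts (hr' : 1 ≤ r) :
    ∃ (B : Type) (_ : CommRing B) (_ : IsDomain B) (ζ : B)
      (b : Module.Basis (Fin ((cyclotomic (p ^ r) ℤ).natDegree)) ℤ B),
      ζ ^ (p ^ r) = 1 ∧ (∀ i < r, ζ ^ (p ^ i) ≠ 1) ∧
      ((p : B) ∣ (ζ - 1) ^ (p ^ r)) := by
  have hp : p.Prime := Fact.out
  have hpos : 0 < p ^ r := pow_pos hp.pos r
  set Φ := cyclotomic (p ^ r) ℤ with hΦ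
  have hirr : Irreducible Φ := cyclotomic.irreducible hpos
  have hprime : Prime Φ := hirr.prime
  haveI : IsDomain (AdjoinRoot Φ) := AdjoinRoot.isDomain_of_prime hprime
  set B := AdjoinRoot Φ
  set ζ : B := AdjoinRoot.root Φ with hζ
  have hmonic : Φ.Monic := cyclotomic.monic _ _
  have hinj : Function.Injective (fun m : ℤ => (m : B)) := by
    intro m₁ m₂ h
    simp only at h
    by_contra hne
    have h0 : ((m₁ - m₂ : ℤ) : B) = 0 := by push_cast; rw [sub_eq_zero]; exact h
    have : (AdjoinRoot.mk Φ) (Polynomial.C (m₁ - m₂)) = 0 := by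
      rwa [AdjoinRoot.mk_C]
    rw [AdjoinRoot.mk_eq_zero] at this
    have hC : (Polynomial.C (m₁ - m₂)) ≠ 0 :=
      Polynomial.C_ne_zero.mpr (sub_ne_zero.mpr hne)
    have hdeg := Polynomial.natDegree_le_of_dvd this hC
    rw [Polynomial.natDegree_C, hΦ, natDegree_cyclotomic] at hdeg
    exact absurd (Nat.le_zero.mp hdeg) (Nat.totient_pos.mpr hpos).ne'
  haveI : CharZero B := by
    refine ⟨fun m₁ m₂ h => ?_⟩
    have h2 : ((m₁ : ℤ) : B) = ((m₂ : ℤ) : B) := by push_cast; exact_mod_cast h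
    exact_mod_cast hinj h2
  haveI : NeZero ((p ^ r : ℕ) : B) := ⟨Nat.cast_ne_zero.mpr hpos.ne'⟩
  have hroot : IsRoot (cyclotomic (p ^ r) B) ζ := by
    rw [← map_cyclotomic (p ^ r) (algebraMap ℤ B), ← hΦ]
    rw [IsRoot, eval_map]
    exact AdjoinRoot.eval₂_root Φ
  have hprim : IsPrimitiveRoot ζ (p ^ r) := (isRoot_cyclotomic_iff).mp hroot
  refine ⟨B, inferInstance, inferInstance, ζ, (AdjoinRoot.powerBasis' hmonic).basis,
    hprim.pow_eq_one, ?_, ?_⟩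
  · intro i hi h1
    rw [hprim.pow_eq_one_iff_dvd (p ^ i)] at h1
    have : r ≤ i := (Nat.pow_dvd_pow_iff_le_right hp.one_lt).mp h1
    omega
  · have hnonunit : (p : B) ∈ nonunits B := by
      rw [mem_nonunits_iff]
      intro hu
      obtain ⟨r', rfl⟩ := Nat.exists_eq_succ_of_ne_zero (by omega : r ≠ 0)
      have hev : Φ.eval₂ (Int.castRingHom (ZMod p)) 1 = 0 := by
        rw [Polynomial.eval₂_at_one, hΦ, eval_one_cyclotomic_prime_pow]
        simp
      let χ : B →+* ZMod p := AdjoinRoot.lift (Int.castRingHom (ZMod p)) 1 hev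
      have : IsUnit ((p : ZMod p)) := by
        have := hu.map χ
        rwa [map_natCast] at this
      rw [ZMod.natCast_self] at this
      exact not_isUnit_zero this
    haveI hchar : CharP (B ⧸ (Ideal.span {(p : B)} : Ideal B)) p :=
      CharP.quotient B p hnonunit
    rw [← Ideal.mem_span_singleton, ← Ideal.Quotient.eq_zero_iff_mem]
    have h1 : ((Ideal.Quotient.mk (Ideal.span {(p : B)})) ((ζ - 1) ^ p ^ r))
        = ((Ideal.Quotient.mk (Ideal.span {(p : B)})) ζ - 1) ^ p ^ r := by
      rw [map_pow, map_sub, map_one]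
    rw [h1, sub_pow_char_pow, one_pow, ← map_pow, hprim.pow_eq_one, map_one, sub_self]

end Cyclo

/-- The multiplicative set `S ⊆ ℤ_(p)⟦X⟧` generated by the Euler classes
`(1+X)^{p^i} − 1` for `0 ≤ i ≤ r−1`. -/
noncomputable def eulerSubmonoid (p r : ℕ) [Fact p.Prime] : Submonoid (PowerSeries (Zp p)) :=
  Submonoid.closure
    ((fun i => (1 + PowerSeries.X : PowerSeries (Zp p)) ^ (p ^ i) - 1) '' Set.Iic (r - 1))

/-- No element of `S` is divisible by `(1+X)^{p^r} − 1`; equivalently, `S` is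
disjoint from the ideal generated by `(1+X)^{p^r} − 1`. -/
theorem eulerSubmonoid_disjoint (p r : ℕ) [Fact p.Prime] (hr : 1 ≤ r) :
    (∀ s ∈ eulerSubmonoid p r,
        ¬ ((1 + PowerSeries.X : PowerSeries (Zp p)) ^ (p ^ r) - 1 ∣ s)) ∧
    Disjoint (eulerSubmonoid p r : Set (PowerSeries (Zp p)))
      (Ideal.span {(1 + PowerSeries.X : PowerSeries (Zp p)) ^ (p ^ r) - 1} :
        Ideal (PowerSeries (Zp p))) := by
  have hp : p.Prime := Fact.out
  have hpZ : Prime (p : ℤ) := Nat.prime_iff_prime_int.mp Fact.out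
  have key : ∀ s ∈ eulerSubmonoid p r,
      ¬ ((1 + PowerSeries.X : PowerSeries (Zp p)) ^ (p ^ r) - 1 ∣ s) := by
    intro s hs hdvd
    obtain ⟨f, hf⟩ := hdvd
    -- express s as a product over a list of exponents
    have hs' : s ∈ Submonoid.closure
        ((fun i => (1 + PowerSeries.X : PowerSeries (Zp p)) ^ (p ^ i) - 1) '' Set.Iic (r - 1)) := hs
    have hlist : ∃ l : List ℕ, (∀ i ∈ l, i < r) ∧
        s = (l.map (fun i => (1 + PowerSeries.X : PowerSeries (Zp p)) ^ (p ^ i) - 1)).prod := by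
      refine Submonoid.closure_induction
        (motive := fun x _ => ∃ l : List ℕ, (∀ i ∈ l, i < r) ∧
          x = (l.map (fun i => (1 + PowerSeries.X : PowerSeries (Zp p)) ^ (p ^ i) - 1)).prod)
        ?_ ⟨[], by simp, by simp⟩ ?_ hs'
      · rintro x ⟨i, hi, rfl⟩
        refine ⟨[i], ?_, by simp⟩
        intro j hj
        have hji : j = i := by simpa using hj
        have hile : i ≤ r - 1 := hi
        omega
      · rintro x y hx hy ⟨lx, hlx, rfl⟩ ⟨ly, hly, rfl⟩
        exact ⟨lx ++ ly, fun i hi => ((List.mem_append.mp hi).elim (hlx i) (hly i)),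
          by rw [List.map_append, List.prod_append]⟩
    obtain ⟨l, hl, hsprod⟩ := hlist
    -- the cyclotomic ring
    obtain ⟨B, iB, iD, ζ, bas, hζpow, hζne, hζdvd⟩ := cyclo_facts p r hr
    -- the product of ζ^{p^i} - 1 is nonzero
    set η : B := (l.map (fun i => ζ ^ (p ^ i) - 1)).prod with hη
    have hηne : η ≠ 0 := by
      refine List.prod_ne_zero ?_
      intro h0
      obtain ⟨i, hi, heq⟩ := List.mem_map.mp h0
      exact hζne i (hl i hi) (by rw [← sub_eq_zero]; exact heq)
    -- choose a coordinate and an exponent M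
    have hrep : ∃ k, bas.repr η k ≠ 0 := by
      by_contra hk
      push_neg at hk
      apply hηne
      have : bas.repr η = 0 := by
        ext k; simpa using hk k
      exact (LinearEquiv.map_eq_zero_iff bas.repr).mp this
    obtain ⟨k, hk⟩ := hrep
    set cc : ℤ := bas.repr η k with hcc
    set M : ℕ := cc.natAbs + 1 with hM
    have hndvd : ¬ ((p : ℤ) ^ M ∣ cc) := by
      intro hdvd
      have h1 : (p : ℤ) ^ M = ((p ^ M : ℕ) : ℤ) := by push_cast; ring
      rw [h1] at hdvd
      have h2 : p ^ M ∣ cc.natAbs := by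
        have h2' := Int.natAbs_dvd_natAbs.mpr hdvd
        rwa [Int.natAbs_natCast] at h2'
      have h3 : p ^ M ≤ cc.natAbs := Nat.le_of_dvd (Int.natAbs_pos.mpr hk) h2
      have h4 : cc.natAbs < p ^ M := by
        calc cc.natAbs < p ^ cc.natAbs := Nat.lt_pow_self hp.one_lt
          _ ≤ p ^ M := Nat.pow_le_pow_right hp.pos (by omega)
      omega
    -- the quotient ring B/(p^M)
    set I : Ideal B := Ideal.span {(p : B) ^ M} with hI
    set π : B →+* (B ⧸ I) := Ideal.Quotient.mk I with hπ
    have hπp : π ((p : B) ^ M) = 0 :=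
      Ideal.Quotient.eq_zero_iff_mem.mpr (Ideal.subset_span rfl)
    set a : B ⧸ I := π ζ - 1 with ha
    have hnil : a ^ (p ^ r * M) = 0 := by
      obtain ⟨w, hw⟩ := hζdvd
      have h1 : a = π (ζ - 1) := by rw [map_sub, map_one]
      rw [h1, ← map_pow, pow_mul, hw, mul_pow, map_mul, hπp, zero_mul]
    -- the coefficient ring map
    have hunits : ∀ y : (Ideal.span {(p : ℤ)}).primeCompl,
        IsUnit ((Int.castRingHom (B ⧸ I)) y) := by
      intro y
      have hy : ¬ ((p : ℤ) ∣ (y : ℤ)) := fun hd => y.2 (Ideal.mem_span_singleton.mpr hd)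
      have hcop : IsCoprime ((y : ℤ)) ((p : ℤ) ^ M) :=
        ((hpZ.coprime_iff_not_dvd.mpr hy).symm).pow_right
      obtain ⟨u, v, huv⟩ := hcop
      have hp0 : (((p : ℤ) ^ M : ℤ) : B ⧸ I) = 0 := by
        push_cast
        rw [← map_natCast π p, ← map_pow, hπp]
      have h2 : (u : B ⧸ I) * ((y : ℤ) : B ⧸ I) + (v : B ⧸ I) * (((p : ℤ) ^ M : ℤ) : B ⧸ I)
          = 1 := by
        exact_mod_cast congrArg (fun t : ℤ => (t : B ⧸ I)) huv
      rw [hp0, mul_zero, add_zero] at h2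
      exact IsUnit.of_mul_eq_one _ (by rw [mul_comm] at h2; exact h2)
    set c : Zp p →+* B ⧸ I := IsLocalization.lift hunits with hc
    set Ψ : PowerSeries (Zp p) →+* B ⧸ I := evalNilHom c a (p ^ r * M) hnil with hΨdef
    have hΨX : Ψ PowerSeries.X = a := evalNilHom_X c a _ hnil
    have hΨ1X : Ψ (1 + PowerSeries.X) = π ζ := by
      rw [map_add, map_one, hΨX, ha]
      ring
    have hΨe : ∀ i : ℕ,
        Ψ ((1 + PowerSeries.X : PowerSeries (Zp p)) ^ (p ^ i) - 1) = π (ζ ^ (p ^ i) - 1) := by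
      intro i
      rw [map_sub, map_one, map_pow, hΨ1X, ← map_pow, ← map_one π, ← map_sub]
    have hΨg : Ψ ((1 + PowerSeries.X : PowerSeries (Zp p)) ^ (p ^ r) - 1) = 0 := by
      rw [hΨe r, hζpow, sub_self, map_zero]
    have hΨs : Ψ s = π η := by
      rw [hsprod, map_list_prod, List.map_map, hη, map_list_prod, List.map_map]
      exact congrArg List.prod (List.map_congr_left fun i _ => hΨe i)
    have hcontra : π η = 0 := by
      rw [← hΨs, hf, map_mul, hΨg, zero_mul]
    have hmem : η ∈ I := Ideal.Quotient.eq_zero_iff_mem.mp hcontra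
    obtain ⟨y, hy⟩ := Ideal.mem_span_singleton.mp hmem
    apply hndvd
    have h5 : η = ((p : ℤ) ^ M) • y := by
      rw [zsmul_eq_mul, hy]
      push_cast
      ring
    have h6 : bas.repr η k = (p : ℤ) ^ M * bas.repr y k := by
      rw [h5, map_smul, Finsupp.smul_apply, smul_eq_mul]
    exact ⟨bas.repr y k, h6⟩
  refine ⟨key, ?_⟩
  rw [Set.disjoint_left]
  intro x hx hx'
  exact key x hx (Ideal.mem_span_singleton.mp hx')
end

section
/- Let p be a prime and r ≥ 1. Let R be the quotient ring ℤ_(p)⟦X⟧ ⧸ ((1+X)^{p^r} − 1), and let S̄ be the submonoid of R generated by the images of the elements (1+X)^{p^i} − 1 for 0 ≤ i ≤ r − 1. Then the localization of R at S̄ is a nontrivial ring (it is not the zero ring). -/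
/-- The quotient `ℤ_(p)⟦X⟧ ⧸ ((1+X)^{p^r} − 1)`, an algebraic model for
`K^0_(p)(B(ℤ/p^r))`. -/
abbrev KZpr (p r : ℕ) [Fact p.Prime] : Type :=
  PowerSeries (Zp p) ⧸
    (Ideal.span {(1 + PowerSeries.X : PowerSeries (Zp p)) ^ (p ^ r) - 1})

/-- The submonoid of `KZpr p r` generated by the images of the Euler classes
`(1+X)^{p^i} − 1` for `0 ≤ i ≤ r−1`. -/
noncomputable def eulerSubmonoidBar (p r : ℕ) [Fact p.Prime] : Submonoid (KZpr p r) :=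
  Submonoid.closure
    ((fun i => Ideal.Quotient.mk _
        ((1 + PowerSeries.X : PowerSeries (Zp p)) ^ (p ^ i) - 1)) '' Set.Iic (r - 1))

set_option maxHeartbeats 1000000 in
set_option synthInstance.maxHeartbeats 400000 in
open Polynomial in
/-- Core algebraic fact: `(1+X)^(p^r) - 1` does not divide any power of
`(1+X)^(p^(r-1)) - 1` in `ℤ_(p)⟦X⟧`. -/
theorem key_not_dvd (p r : ℕ) [Fact p.Prime] (hr : 1 ≤ r) (N : ℕ) :
    ¬ ((1 + PowerSeries.X : PowerSeries (Zp p)) ^ p ^ r - 1 ∣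
       ((1 + PowerSeries.X : PowerSeries (Zp p)) ^ p ^ (r - 1) - 1) ^ N) := by
  have hp : p.Prime := Fact.out
  set R0 := Zp p with hR0
  haveI : IsDomain R0 := IsLocalization.isDomain_of_local_atPrime (span_p_isPrime p)
  haveI : IsDiscreteValuationRing R0 :=
    IsLocalization.AtPrime.isDiscreteValuationRing_of_dedekind_domain (A := ℤ)
      (P := Ideal.span {(p : ℤ)})
      (by
        rw [Ne, Ideal.span_singleton_eq_bot]
        exact_mod_cast hp.ne_zero) R0
  rintro ⟨h, hh⟩
  have hr' : r - 1 + 1 = r := Nat.succ_pred_eq_of_pos hr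
  set ι := algebraMap ℤ R0 with hι
  -- the Eisenstein polynomial
  set Φℤ : ℤ[X] := (cyclotomic (p ^ r) ℤ).comp (X + 1) with hΦℤ
  have hEis : Φℤ.IsEisensteinAt (Ideal.span {(p : ℤ)}) := by
    have := cyclotomic_prime_pow_comp_X_add_one_isEisensteinAt p (r - 1)
    rwa [hr'] at this
  have hΦℤmonic : Φℤ.Monic := by
    rw [hΦℤ, show (X + 1 : ℤ[X]) = X + C 1 by simp]
    exact (cyclotomic.monic _ ℤ).comp (monic_X_add_C 1) (by rw [natDegree_X_add_C]; omega)
  have hΦℤdeg : Φℤ.natDegree = (p ^ r).totient := by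
    rw [hΦℤ, natDegree_comp, show (X + 1 : ℤ[X]) = X + C 1 by simp, natDegree_X_add_C,
      natDegree_cyclotomic, mul_one]
  have hΦℤc0 : Φℤ.coeff 0 = (p : ℤ) := by
    rw [hΦℤ, coeff_zero_eq_eval_zero, eval_comp]
    simp only [eval_add, eval_X, eval_one, zero_add]
    rw [← hr', eval_one_cyclotomic_prime_pow]
  set Φ : R0[X] := Φℤ.map ι with hΦdef
  have hΦmonic : Φ.Monic := hΦℤmonic.map ι
  have hΦdeg : Φ.natDegree = (p ^ r).totient := by
    rw [hΦdef, hΦℤmonic.natDegree_map, hΦℤdeg]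
  have hΦc0 : Φ.coeff 0 = ι p := by rw [hΦdef, coeff_map, hΦℤc0]
  have hιp_ne : ι p ≠ 0 := by
    intro h0
    have hinj := IsLocalization.injective R0 (Ideal.span {(p : ℤ)}).primeCompl_le_nonZeroDivisors
    have : (p : ℤ) = 0 := hinj (by rw [h0, map_zero])
    exact hp.ne_zero (by exact_mod_cast this)
  have hιp_notunit : ¬ IsUnit (ι p) := by
    rw [IsLocalization.AtPrime.isUnit_to_map_iff R0 (Ideal.span {(p : ℤ)})]
    exact fun hmem => hmem (Ideal.subset_span rfl)
  have hPr : (Ideal.span {ι p}).IsPrime := by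
    have : Ideal.span {ι p} = IsLocalRing.maximalIdeal R0 := by
      rw [← Localization.AtPrime.map_eq_maximalIdeal, Ideal.map_span, Set.image_singleton]
    rw [this]
    exact (IsLocalRing.maximalIdeal.isMaximal R0).isPrime
  have hEisR : Φ.IsEisensteinAt (Ideal.span {ι p}) := by
    refine ⟨?_, ?_, ?_⟩
    · rw [hΦmonic.leadingCoeff]
      intro h1
      exact hPr.ne_top (Ideal.eq_top_of_isUnit_mem _ h1 isUnit_one)
    · intro n hn
      rw [hΦdeg, ← hΦℤdeg] at hn
      have hmem := hEis.mem hn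
      rw [Ideal.mem_span_singleton] at hmem
      rw [hΦdef, coeff_map, Ideal.mem_span_singleton]
      exact map_dvd ι hmem
    · rw [hΦc0, pow_two, Ideal.span_singleton_mul_span_singleton, Ideal.mem_span_singleton]
      rintro ⟨c, hc⟩
      apply hιp_notunit
      have hz : ι p * (1 - ι p * c) = 0 := by linear_combination hc
      rcases mul_eq_zero.mp hz with h0 | h0
      · exact absurd h0 hιp_ne
      · exact IsUnit.of_mul_eq_one c (by linear_combination -h0)
  have hΦne : Φ ≠ 0 := hΦmonic.ne_zero
  have hΦirr : Irreducible Φ :=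
    hEisR.irreducible hPr hΦmonic.isPrimitive
      (by rw [hΦdeg]; exact Nat.totient_pos.mpr (pow_pos hp.pos r))
  have hΦprime : Prime Φ := (UniqueFactorizationMonoid.irreducible_iff_prime).mp hΦirr
  haveI hspanprime : (Ideal.span {Φ}).IsPrime := (Ideal.span_singleton_prime hΦne).mpr hΦprime
  haveI : IsDomain (R0[X] ⧸ Ideal.span {Φ}) := Ideal.Quotient.isDomain _
  set mkB := Ideal.Quotient.mk (Ideal.span {Φ}) with hmkB
  haveI : IsNoetherianRing (R0[X] ⧸ Ideal.span {Φ}) :=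
    isNoetherianRing_of_surjective _ _ (Ideal.Quotient.mk (Ideal.span {Φ}))
      Ideal.Quotient.mk_surjective
  -- polynomials
  set GP : R0[X] := (X + 1) ^ p ^ (r - 1) - 1 with hGP
  set FP : R0[X] := (X + 1) ^ p ^ r - 1 with hFP
  have hΦdvdFP : Φ ∣ FP := by
    obtain ⟨w, hw⟩ := cyclotomic.dvd_X_pow_sub_one (p ^ r) ℤ
    have h2 : Φℤ ∣ (X + 1 : ℤ[X]) ^ p ^ r - 1 := by
      refine ⟨w.comp (X + 1), ?_⟩
      have := congrArg (fun q : ℤ[X] => q.comp (X + 1)) hw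
      simpa [sub_comp, pow_comp, X_comp, one_comp, mul_comp] using this
    have h3 := Polynomial.map_dvd ι h2
    rwa [Polynomial.map_sub, Polynomial.map_pow, Polynomial.map_add, Polynomial.map_one,
      map_X] at h3
  have hFP0 : mkB FP = 0 :=
    Ideal.Quotient.eq_zero_iff_mem.mpr (Ideal.mem_span_singleton.mpr hΦdvdFP)
  -- the span of (mkB X) is a proper ideal
  have hITop : Ideal.span {mkB X} ≠ ⊤ := by
    intro htop
    rw [Ideal.span_singleton_eq_top (α := (R0[X] ⧸ Ideal.span {Φ}))] at htop
    obtain ⟨b, hb⟩ := htop.exists_right_inv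
    obtain ⟨q, rfl⟩ := Ideal.Quotient.mk_surjective b
    have hmem : (X * q - 1 : R0[X]) ∈ Ideal.span {Φ} := by
      rw [← Ideal.Quotient.eq_zero_iff_mem, map_sub, map_mul, map_one]
      rw [hmkB] at hb
      rw [hb, sub_self]
    rw [Ideal.mem_span_singleton] at hmem
    obtain ⟨t, ht⟩ := hmem
    have hev := congrArg (Polynomial.eval 0) ht
    rw [eval_sub, eval_mul, eval_X, eval_one, zero_mul, zero_sub, eval_mul,
      ← coeff_zero_eq_eval_zero, hΦc0] at hev
    exact hιp_notunit (IsUnit.of_mul_eq_one (-(t.eval 0)) (by linear_combination hev))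
  -- Krull intersection membership
  have hmem : ∀ n : ℕ, mkB GP ^ N ∈ Ideal.span {mkB X} ^ n := by
    intro n
    have hXdvd : (X : R0[X]) ^ n ∣ GP ^ N - FP * PowerSeries.trunc n h := by
      rw [Polynomial.X_pow_dvd_iff]
      intro d hd
      have hcoe : ((GP ^ N - FP * PowerSeries.trunc n h : R0[X]) : PowerSeries R0) =
          ((1 + PowerSeries.X : PowerSeries R0) ^ p ^ r - 1) *
            (h - (PowerSeries.trunc n h : R0[X])) := by
        push_cast [hGP, hFP]
        rw [mul_sub, ← hh]
        ring
      have hXps : (PowerSeries.X : PowerSeries R0) ^ n ∣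
          ((1 + PowerSeries.X : PowerSeries R0) ^ p ^ r - 1) *
            (h - (PowerSeries.trunc n h : R0[X])) := by
        refine Dvd.dvd.mul_left ?_ _
        rw [PowerSeries.X_pow_dvd_iff]
        intro m hm
        rw [map_sub, Polynomial.coeff_coe, PowerSeries.coeff_trunc, if_pos hm, sub_self]
      rw [← Polynomial.coeff_coe, hcoe]
      exact PowerSeries.X_pow_dvd_iff.mp hXps d hd
    obtain ⟨t, ht⟩ := hXdvd
    have heq : mkB GP ^ N = mkB X ^ n * mkB t := by
      have := congrArg mkB ht
      rw [map_sub, map_mul, hFP0, zero_mul (M₀ := (R0[X] ⧸ Ideal.span {Φ})), sub_zero, map_mul, map_pow, map_pow] at this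
      exact this
    haveI : (Ideal.span {mkB X}).IsTwoSided :=
      ⟨fun b ha ↦ mul_comm b _ ▸ (Ideal.span {mkB X}).smul_mem _ ha⟩
    rw [heq, Ideal.span_singleton_pow (R := (R0[X] ⧸ Ideal.span {Φ}))]
    exact (Ideal.mem_span_singleton (α := (R0[X] ⧸ Ideal.span {Φ}))).mpr (dvd_mul_right _ _)
  have hbot : mkB GP ^ N = 0 := by
    have hKrull := Ideal.iInf_pow_eq_bot_of_isDomain (I := Ideal.span {mkB X}) hITop
    rw [← Ideal.mem_bot (R := (R0[X] ⧸ Ideal.span {Φ})), ← hKrull]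
    exact (Submodule.mem_iInf _).mpr hmem
  -- endgame
  have hGPdeg : GP.natDegree = p ^ (r - 1) := by
    rw [hGP, show (1 : R0[X]) = C 1 by simp, natDegree_sub_C,
      show (X + C (1:R0) : R0[X]) ^ p ^ (r-1) = (X + C (1:R0)) ^ p ^ (r-1) from rfl,
      (monic_X_add_C (1:R0)).natDegree_pow, natDegree_X_add_C, mul_one]
  have hGPne : GP ≠ 0 := by
    intro h0
    rw [h0, natDegree_zero] at hGPdeg
    exact (pow_ne_zero (r-1) hp.ne_zero) hGPdeg.symm
  have hdvdGP : Φ ∣ GP := by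
    have hmemP : GP ^ N ∈ Ideal.span {Φ} := by
      rw [← Ideal.Quotient.eq_zero_iff_mem, map_pow]
      exact hbot
    exact Ideal.mem_span_singleton.mp (hspanprime.mem_of_pow_mem N hmemP)
  obtain ⟨t, ht⟩ := hdvdGP
  have hev := congrArg (Polynomial.eval 0) ht
  have hGPev : GP.eval 0 = 0 := by simp [hGP]
  rw [hGPev, eval_mul, ← coeff_zero_eq_eval_zero, hΦc0] at hev
  have ht0 : t.eval 0 = 0 := by
    rcases mul_eq_zero.mp hev.symm with h0 | h0
    · exact absurd h0 hιp_ne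
    · exact h0
  obtain ⟨s, rfl⟩ := (Polynomial.X_dvd_iff (f := t)).mpr (by rw [coeff_zero_eq_eval_zero]; exact ht0)
  have hs0 : s ≠ 0 := by
    rintro rfl
    rw [mul_zero, mul_zero] at ht
    exact hGPne ht
  have hdegeq : GP.natDegree = Φ.natDegree + (1 + s.natDegree) := by
    rw [ht, natDegree_mul hΦne (mul_ne_zero Polynomial.X_ne_zero hs0),
      natDegree_mul Polynomial.X_ne_zero hs0, natDegree_X]
  rw [hGPdeg, hΦdeg, Nat.totient_prime_pow hp hr] at hdegeq
  have h2le : 2 ≤ p := hp.two_le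
  have hle : p ^ (r-1) * 1 ≤ p ^ (r-1) * (p - 1) := Nat.mul_le_mul_left _ (by omega)
  omega

/-- `K`-theory localized at `p` is `ℤ/p^r`-sensitive: the localization of
`K^0_(p)(B(ℤ/p^r))` at the Euler classes is not the zero ring. -/
theorem localization_nontrivial (p r : ℕ) [Fact p.Prime] (hr : 1 ≤ r) :
    Nontrivial (Localization (eulerSubmonoidBar p r)) := by
  by_contra hnt
  rw [not_nontrivial_iff_subsingleton] at hnt
  have h0 : (0 : KZpr p r) ∈ eulerSubmonoidBar p r := by
    have h01 : (0 : Localization (eulerSubmonoidBar p r)) = 1 := Subsingleton.elim _ _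
    rw [← Localization.mk_zero (1 : eulerSubmonoidBar p r), ← Localization.mk_one,
      Localization.mk_eq_mk_iff, Localization.r_iff_exists] at h01
    obtain ⟨c, hc⟩ := h01
    have hc0 : (c : KZpr p r) = 0 := ((by simpa using hc : (0 : KZpr p r) = c)).symm
    rw [← hc0]
    exact c.2
  have main : ∀ x ∈ eulerSubmonoidBar p r, ∃ (F : PowerSeries (Zp p)) (N : ℕ),
      Ideal.Quotient.mk
          (Ideal.span {(1 + PowerSeries.X : PowerSeries (Zp p)) ^ (p ^ r) - 1}) F = x ∧
      F ∣ ((1 + PowerSeries.X : PowerSeries (Zp p)) ^ p ^ (r - 1) - 1) ^ N := by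
    intro x hx
    induction hx using Submonoid.closure_induction with
    | mem y hy =>
        obtain ⟨i, hi, rfl⟩ := hy
        refine ⟨_, 1, rfl, ?_⟩
        rw [pow_one]
        have hii : i ≤ r - 1 := hi
        have hd := sub_dvd_pow_sub_pow
          ((1 + PowerSeries.X : PowerSeries (Zp p)) ^ p ^ i) 1 (p ^ (r - 1 - i))
        rw [one_pow, ← pow_mul, ← pow_add, show i + (r - 1 - i) = r - 1 by omega] at hd
        exact hd
    | one => exact ⟨1, 0, map_one _, by rw [pow_zero]⟩
    | mul a b ha hb iha ihb =>
        obtain ⟨F1, N1, h1, d1⟩ := iha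
        obtain ⟨F2, N2, h2, d2⟩ := ihb
        exact ⟨F1 * F2, N1 + N2, by rw [map_mul, h1, h2],
          by rw [pow_add]; exact mul_dvd_mul d1 d2⟩
  obtain ⟨F, N, hF, hdvd⟩ := main 0 h0
  have hmem : F ∈ Ideal.span {(1 + PowerSeries.X : PowerSeries (Zp p)) ^ p ^ r - 1} :=
    Ideal.Quotient.eq_zero_iff_mem.mp hF
  exact key_not_dvd p r hr N (dvd_trans (Ideal.mem_span_singleton.mp hmem) hdvd)
end

section
/- Let p be a prime, a ≥ 1 and m > 1 with p not dividing m, and set n = p^a·m. Let R be the quotient ring ℤ_(p)⟦X⟧ ⧸ ((1+X)^n − 1), and let S̄ be the submonoid of R generated by the images of the elements (1+X)^j − 1 for 1 ≤ j ≤ n − 1. Then the localization of R at S̄ is the zero ring. -/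
/-- The quotient `ℤ_(p)⟦X⟧ ⧸ ((1+X)^n − 1)`, an algebraic model for
`K^0_(p)(B(ℤ/n))`. -/
abbrev KZn (p n : ℕ) [Fact p.Prime] : Type :=
  PowerSeries (Zp p) ⧸
    (Ideal.span {(1 + PowerSeries.X : PowerSeries (Zp p)) ^ n - 1})

/-- The submonoid of `KZn p n` generated by the images of the Euler classes
`(1+X)^j − 1` for `1 ≤ j ≤ n−1`. -/
noncomputable def eulerSubmonoidZn (p n : ℕ) [Fact p.Prime] : Submonoid (KZn p n) :=
  Submonoid.closure
    ((fun j => Ideal.Quotient.mk _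
        ((1 + PowerSeries.X : PowerSeries (Zp p)) ^ j - 1)) '' Set.Icc 1 (n - 1))

/-- If `n = p^a·m` with `a ≥ 1`, `m > 1`, `p ∤ m`, then `K`-theory localized at `p`
is not `ℤ/n`-sensitive: the localization of `K^0_(p)(B(ℤ/n))` at the Euler classes
is the zero ring. -/
theorem localization_subsingleton (p a m : ℕ) [Fact p.Prime]
    (ha : 1 ≤ a) (hm : 1 < m) (hpm : ¬ p ∣ m) :
    Subsingleton (Localization (eulerSubmonoidZn p (p ^ a * m))) := by
  set n := p ^ a * m with hn
  -- the geometric sum is a unit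
  set x : PowerSeries (Zp p) := (1 + PowerSeries.X) ^ (p ^ a) with hx
  have hfu : IsUnit (∑ i ∈ Finset.range m, x ^ i) := by
    rw [PowerSeries.isUnit_iff_constantCoeff]
    have : (PowerSeries.constantCoeff (R := Zp p)) (∑ i ∈ Finset.range m, x ^ i) = (m : Zp p) := by
      simp [hx, map_sum, map_pow]
    rw [this]
    have : (m : Zp p) = algebraMap ℤ (Zp p) (m : ℤ) := by push_cast; rfl
    rw [this, IsLocalization.AtPrime.isUnit_to_map_iff (Zp p) (Ideal.span {(p : ℤ)})]
    simp only [Ideal.primeCompl, Submonoid.mem_mk, Subsemigroup.mem_mk, Set.mem_compl_iff,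
      SetLike.mem_coe, Ideal.mem_span_singleton]
    exact fun h => hpm (by exact_mod_cast Int.natCast_dvd_natCast.mp (by exact_mod_cast h))
  -- the Euler class of p^a is zero in the quotient
  have key : (Ideal.Quotient.mk _ ((1 + PowerSeries.X : PowerSeries (Zp p)) ^ (p ^ a) - 1)
      : KZn p n) = 0 := by
    have hgeom : (∑ i ∈ Finset.range m, x ^ i) * (x - 1)
        = (1 + PowerSeries.X : PowerSeries (Zp p)) ^ n - 1 := by
      rw [geom_sum_mul, hx, ← pow_mul, hn]
    have h0 : (Ideal.Quotient.mk _ ((∑ i ∈ Finset.range m, x ^ i) * (x - 1)) : KZn p n) = 0 := by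
      rw [hgeom, Ideal.Quotient.eq_zero_iff_mem]
      exact Ideal.subset_span rfl
    rw [map_mul] at h0
    have hu : IsUnit ((Ideal.Quotient.mk _ (∑ i ∈ Finset.range m, x ^ i)) : KZn p n) :=
      hfu.map _
    rcases hu with ⟨u, hu⟩
    rw [← hu] at h0
    exact (Units.mul_right_eq_zero u).mp h0
  -- hence 0 is in the submonoid
  have h0mem : (0 : KZn p n) ∈ eulerSubmonoidZn p n := by
    rw [← key]
    apply Submonoid.subset_closure
    refine ⟨p ^ a, ?_, rfl⟩
    have hpa : 1 ≤ p ^ a := Nat.one_le_pow _ _ (Fact.out : p.Prime).pos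
    constructor
    · exact hpa
    · have : p ^ a * 2 ≤ n := by
        rw [hn]; exact Nat.mul_le_mul_left _ hm
      omega
  exact IsLocalization.subsingleton (M := eulerSubmonoidZn p n)
    (S := Localization (eulerSubmonoidZn p n)) h0mem
end

section
/- Let G be a finite abelian group which is not cyclic. Then in the group algebra ℤ[G] (Mathlib's MonoidAlgebra ℤ G), the product over all non-identity elements g of G of the elements ([g] − 1) equals zero, where [g] denotes the canonical image of g in ℤ[G]. -/
open Function

/-- A commutative semisimple ring is reduced. -/
lemma isReduced_of_isSemisimpleRing {R : Type*} [CommRing R] [IsSemisimpleRing R] :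
    IsReduced R := by
  constructor
  intro x hx
  obtain ⟨n, hn⟩ := hx
  obtain ⟨e, he, hspan⟩ := IsSemisimpleRing.ideal_eq_span_idempotent (Ideal.span {x})
  have hx_mem : x ∈ Ideal.span ({e} : Set R) := hspan ▸ Ideal.mem_span_singleton_self x
  have he_mem : e ∈ Ideal.span ({x} : Set R) := hspan.symm ▸ Ideal.mem_span_singleton_self e
  rw [Ideal.mem_span_singleton] at hx_mem he_mem
  obtain ⟨a, ha⟩ := hx_mem
  obtain ⟨d, hd⟩ := he_mem
  have he0 : e = 0 := by
    calc e = e ^ (n + 1) := (he.pow_succ_eq n).symm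
      _ = (x * d) ^ (n + 1) := by rw [← hd]
      _ = x ^ n * x * d ^ (n + 1) := by rw [mul_pow, pow_succ]
      _ = 0 := by rw [hn, zero_mul, zero_mul]
  rw [ha, he0, zero_mul]

/-- The coefficient-extension ring hom `ℤ[G] → k[G]`. -/
noncomputable def castMonoidAlgebraHom (k : Type*) [CommRing k] (G : Type*) [CommGroup G] :
    MonoidAlgebra ℤ G →+* MonoidAlgebra k G :=
  MonoidAlgebra.liftNCRingHom
    ((MonoidAlgebra.singleOneRingHom : k →+* MonoidAlgebra k G).comp (Int.castRingHom k))
    (MonoidAlgebra.of k G) (fun _ _ => mul_comm _ _)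

lemma castMonoidAlgebraHom_eq (k : Type*) [CommRing k] (G : Type*) [CommGroup G]
    (x : MonoidAlgebra ℤ G) :
    castMonoidAlgebraHom k G x =
      MonoidAlgebra.ofCoeff (Finsupp.mapRange (fun r : ℤ => (r : k)) Int.cast_zero x.coeff) := by
  induction x using MonoidAlgebra.induction_linear with
  | zero => simp [map_zero]
  | add a b ha hb =>
      rw [map_add, ha, hb, MonoidAlgebra.coeff_add, Finsupp.mapRange_add (by push_cast; simp),
        MonoidAlgebra.ofCoeff_add]
  | single a b =>
      rw [MonoidAlgebra.coeff_single, Finsupp.mapRange_single, MonoidAlgebra.ofCoeff_single]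
      show MonoidAlgebra.liftNC _ _ (MonoidAlgebra.single a b) = _
      rw [MonoidAlgebra.liftNC_single]
      show MonoidAlgebra.single (1 : G) ((b : ℤ) : k) * MonoidAlgebra.single a (1 : k) = _
      rw [MonoidAlgebra.single_mul_single, one_mul, mul_one]

lemma castMonoidAlgebraHom_injective (k : Type*) [CommRing k] [CharZero k]
    (G : Type*) [CommGroup G] :
    Function.Injective (castMonoidAlgebraHom k G) := by
  intro x y hxy
  rw [castMonoidAlgebraHom_eq, castMonoidAlgebraHom_eq] at hxy
  exact MonoidAlgebra.coeff_injective
    (Finsupp.mapRange_injective _ _ Int.cast_injective (MonoidAlgebra.ofCoeff_injective hxy))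

/-- The integral group algebra of a finite abelian group is reduced. -/
lemma monoidAlgebraInt_isReduced (G : Type u) [CommGroup G] [Fintype G] :
    IsReduced (MonoidAlgebra ℤ G) := by
  haveI : CharZero (ULift.{u} ℚ) := RingHom.charZero (ULift.ringEquiv.toRingHom)
  haveI : NeZero ((Fintype.card G : ULift.{u} ℚ)) :=
    ⟨Nat.cast_ne_zero.mpr (Fintype.card_ne_zero : Fintype.card G ≠ 0)⟩
  haveI : IsReduced (MonoidAlgebra (ULift.{u} ℚ) G) := isReduced_of_isSemisimpleRing
  constructor
  intro x hx
  obtain ⟨n, hn⟩ := hx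
  have hnil : IsNilpotent (castMonoidAlgebraHom (ULift.{u} ℚ) G x) :=
    ⟨n, by rw [← map_pow, hn, map_zero]⟩
  have h0 : castMonoidAlgebraHom (ULift.{u} ℚ) G x = 0 := IsReduced.eq_zero _ hnil
  exact castMonoidAlgebraHom_injective (ULift.{u} ℚ) G (by rw [h0, map_zero])

/-- For a finite abelian group `G` which is not cyclic, the product over all
non-identity elements `g ∈ G` of `[g] − 1` vanishes in the integral group
algebra `ℤ[G]`. -/
theorem prod_of_sub_one_eq_zero (G : Type*) [CommGroup G] [Fintype G] [DecidableEq G]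
    (h : ¬ IsCyclic G) :
    ∏ g ∈ Finset.univ.erase (1 : G), (MonoidAlgebra.of ℤ G g - 1) = 0 := by
  set P : MonoidAlgebra ℤ G :=
    ∏ g ∈ Finset.univ.erase (1 : G), (MonoidAlgebra.of ℤ G g - 1) with hP
  -- Step 1: `P` lies in every prime ideal of `ℤ[G]`.
  have hmem : ∀ J : Ideal (MonoidAlgebra ℤ G), J.IsPrime → P ∈ J := by
    intro J hJ
    let f : G →* MonoidAlgebra ℤ G ⧸ J :=
      ((Ideal.Quotient.mk J) : MonoidAlgebra ℤ G →+* MonoidAlgebra ℤ G ⧸ J).toMonoidHom.comp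
        (MonoidAlgebra.of ℤ G)
    have hninj : ¬ Function.Injective f := fun hf => h (isCyclic_of_subgroup_isDomain f hf)
    rw [Function.not_injective_iff] at hninj
    obtain ⟨a, b, hab, hne⟩ := hninj
    -- the element `g = a * b⁻¹ ≠ 1` satisfies `f g = 1`
    set g : G := a * b⁻¹ with hg
    have hg1 : g ≠ 1 := by
      intro hc
      exact hne (by rwa [hg, mul_inv_eq_one] at hc)
    have hfb_unit : IsUnit (f b) := ⟨⟨f b, f b⁻¹, by rw [← map_mul, mul_inv_cancel, map_one],
      by rw [← map_mul, inv_mul_cancel, map_one]⟩, rfl⟩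
    have hfb_ne : f b ≠ 0 := hfb_unit.ne_zero
    have key : (f g - 1) * f b = 0 := by
      rw [sub_mul, one_mul, ← map_mul, hg, inv_mul_cancel_right, hab, sub_self]
    have hfg : f g - 1 = 0 := by
      rcases mul_eq_zero.mp key with h1 | h2
      · exact h1
      · exact absurd h2 hfb_ne
    -- hence `of g - 1 ∈ J`
    have hJg : (MonoidAlgebra.of ℤ G g - 1 : MonoidAlgebra ℤ G) ∈ J := by
      rw [← Ideal.Quotient.eq_zero_iff_mem, map_sub, map_one]
      exact hfg
    -- the factor divides the product
    have hgmem : g ∈ Finset.univ.erase (1 : G) := Finset.mem_erase.mpr ⟨hg1, Finset.mem_univ g⟩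
    obtain ⟨c, hc⟩ := Finset.dvd_prod_of_mem (fun g => MonoidAlgebra.of ℤ G g - 1) hgmem
    rw [hP, hc]
    exact Ideal.mul_mem_right _ _ hJg
  -- Step 2: `P` is nilpotent.
  have hnil : IsNilpotent P := by
    rw [← mem_nilradical, nilradical_eq_sInf, Submodule.mem_sInf]
    intro J hJ
    exact hmem J hJ
  -- Step 3: `ℤ[G]` is reduced, so `P = 0`.
  haveI := monoidAlgebraInt_isReduced G
  exact IsReduced.eq_zero _ hnil
end

section
/- Let p be a prime. Let R be the quotient ring ℤ_(p)⟦X,Y⟧ ⧸ ((1+X)^p − 1, (1+Y)^p − 1) of the formal power series ring in two variables over ℤ_(p), and let S̄ be the submonoid of R generated by the images of the elements (1+X)^a·(1+Y)^b − 1 for 0 ≤ a, b ≤ p − 1 with (a,b) ≠ (0,0). Then the localization of R at S̄ is the zero ring. -/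
/-- `ℤ_(p)⟦X,Y⟧`, the formal power series ring in two variables over `ℤ_(p)`. -/
abbrev ZpXY (p : ℕ) [Fact p.Prime] : Type :=
  MvPowerSeries (Fin 2) (Zp p)

/-- The quotient `ℤ_(p)⟦X,Y⟧ ⧸ ((1+X)^p − 1, (1+Y)^p − 1)`, an algebraic model for
`K^0_(p)(B(ℤ/p × ℤ/p))`. -/
abbrev KZpZp (p : ℕ) [Fact p.Prime] : Type :=
  ZpXY p ⧸ (Ideal.span
    {(1 + MvPowerSeries.X 0 : ZpXY p) ^ p - 1,
     (1 + MvPowerSeries.X 1 : ZpXY p) ^ p - 1})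

/-- The submonoid of `KZpZp p` generated by the images of the Euler classes
`(1+X)^a·(1+Y)^b − 1` for `0 ≤ a, b ≤ p−1`, `(a,b) ≠ (0,0)`. -/
noncomputable def eulerSubmonoidZpZp (p : ℕ) [Fact p.Prime] : Submonoid (KZpZp p) :=
  Submonoid.closure
    ((fun ab : ℕ × ℕ => Ideal.Quotient.mk _
        ((1 + MvPowerSeries.X 0 : ZpXY p) ^ ab.1
          * (1 + MvPowerSeries.X 1 : ZpXY p) ^ ab.2 - 1)) ''
      {ab : ℕ × ℕ | ab.1 ≤ p - 1 ∧ ab.2 ≤ p - 1 ∧ ab ≠ (0, 0)})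

section AuxEuler

open Polynomial Finset

/-! ### Auxiliary results -/

section Complex

/-- For a primitive `p`-th root of unity in ℂ, the `p`-th roots are exactly its powers. -/
lemma nthRoots_eq_image_aux {p : ℕ} (hp : p.Prime) {μ : ℂ} (hμ : IsPrimitiveRoot μ p) :
    nthRootsFinset p (1 : ℂ) = (range p).image (μ ^ ·) := by
  symm
  apply Finset.eq_of_subset_of_card_le
  · intro z hz
    simp only [Finset.mem_image, Finset.mem_range] at hz
    obtain ⟨k, _, rfl⟩ := hz
    rw [Polynomial.mem_nthRootsFinset hp.pos 1, ← pow_mul, mul_comm, pow_mul, hμ.pow_eq_one,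
      one_pow]
  · rw [hμ.card_nthRootsFinset, Finset.card_image_of_injOn, Finset.card_range]
    intro i hi j hj h
    exact hμ.pow_inj (Finset.mem_range.1 hi) (Finset.mem_range.1 hj) h

lemma prod_X_sub_pow_aux {p : ℕ} (hp : p.Prime) {μ : ℂ} (hμ : IsPrimitiveRoot μ p) :
    ∏ k ∈ range p, ((X : ℂ[X]) - C (μ ^ k)) = X ^ p - 1 := by
  rw [X_pow_sub_one_eq_prod hp.pos hμ, nthRoots_eq_image_aux hp hμ,
    Finset.prod_image]
  intro i hi j hj h
  exact hμ.pow_inj (Finset.mem_range.1 hi) (Finset.mem_range.1 hj) h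

lemma prod_X_sub_pow_Ico_aux {p : ℕ} (hp : p.Prime) {μ : ℂ} (hμ : IsPrimitiveRoot μ p) :
    ∏ k ∈ Finset.Ico 1 p, ((X : ℂ[X]) - C (μ ^ k)) = ∑ j ∈ range p, X ^ j := by
  have h0 : ((X : ℂ[X]) - C 1) ≠ 0 := X_sub_C_ne_zero 1
  apply mul_left_cancel₀ h0
  have := prod_X_sub_pow_aux hp hμ
  rw [Finset.range_eq_Ico, Finset.prod_eq_prod_Ico_succ_bot hp.pos] at this
  rw [show ((X : ℂ[X]) - C 1) * ∑ j ∈ range p, X ^ j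
      = (∑ j ∈ range p, (X:ℂ[X]) ^ j) * (X - 1) by rw [C_1]; ring, geom_sum_mul, ← this]
  simp [pow_zero]

lemma prod_one_sub_pow_aux {p : ℕ} (hp : p.Prime) {μ : ℂ} (hμ : IsPrimitiveRoot μ p) :
    ∏ k ∈ Finset.Ico 1 p, (1 - μ ^ k) = (p : ℂ) := by
  have := congrArg (Polynomial.eval 1) (prod_X_sub_pow_Ico_aux hp hμ)
  simpa [Polynomial.eval_prod] using this

/-- The key universal polynomial congruence. -/
lemma key_dvd_aux (p : ℕ) (hp : p.Prime) :
    ((X : ℤ[X]) ^ p - 1) ∣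
      (∏ k ∈ Finset.Ico 1 p, ((X : ℤ[X]) ^ k - 1)
        - (-1) ^ (p - 1) * (C (p : ℤ) - ∑ j ∈ range p, X ^ j)) := by
  set F : ℤ[X] := ∏ k ∈ Finset.Ico 1 p, ((X : ℤ[X]) ^ k - 1)
        - (-1) ^ (p - 1) * (C (p : ℤ) - ∑ j ∈ range p, X ^ j) with hF
  have hg : ((X : ℤ[X]) ^ p - 1).Monic := by
    have := monic_X_pow_sub_C (1 : ℤ) hp.ne_zero
    rwa [C_1] at this
  have hmap : F.map (Int.castRingHom ℂ) = ∏ k ∈ Finset.Ico 1 p, ((X : ℂ[X]) ^ k - 1)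
        - (-1) ^ (p - 1) * (C (p : ℂ) - ∑ j ∈ range p, X ^ j) := by
    simp [hF, Polynomial.map_sub, Polynomial.map_prod, Polynomial.map_pow,
      Polynomial.map_mul, Polynomial.map_sum, Polynomial.map_one, Polynomial.map_neg]
  have hdvd : ((X : ℂ[X]) ^ p - 1) ∣ F.map (Int.castRingHom ℂ) := by
    obtain ⟨ζ, hζ⟩ : ∃ ζ : ℂ, IsPrimitiveRoot ζ p := ⟨_, Complex.isPrimitiveRoot_exp p hp.ne_zero⟩
    rw [X_pow_sub_one_eq_prod hp.pos hζ]
    apply Finset.prod_dvd_of_coprime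
    · intro x hx y hy hxy
      exact isCoprime_X_sub_C_of_isUnit_sub (sub_ne_zero.2 hxy).isUnit
    · intro μ hμmem
      rw [dvd_iff_isRoot]
      have hμp : μ ^ p = 1 := (Polynomial.mem_nthRootsFinset hp.pos 1).1 hμmem
      have heval : Polynomial.eval μ (F.map (Int.castRingHom ℂ))
          = ∏ k ∈ Finset.Ico 1 p, (μ ^ k - 1)
            - (-1) ^ (p - 1) * ((p : ℂ) - ∑ j ∈ range p, μ ^ j) := by
        rw [hmap]
        simp [Polynomial.eval_prod, Polynomial.eval_finset_sum]
      rw [IsRoot.def, heval]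
      by_cases h1 : μ = 1
      · subst h1
        rw [Finset.prod_eq_zero (Finset.mem_Ico.2 ⟨le_refl 1, hp.one_lt⟩) (by simp)]
        simp
      · have hord : orderOf μ = p := by
          have hdvd' : orderOf μ ∣ p := orderOf_dvd_of_pow_eq_one hμp
          rcases (Nat.dvd_prime hp).1 hdvd' with h | h
          · exact absurd (orderOf_eq_one_iff.1 h) h1
          · exact h
        have hμ : IsPrimitiveRoot μ p := hord ▸ IsPrimitiveRoot.orderOf μ
        have hsum : ∑ j ∈ range p, μ ^ j = 0 := hμ.geom_sum_eq_zero hp.one_lt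
        have hprod : ∏ k ∈ Finset.Ico 1 p, (μ ^ k - 1) = (-1) ^ (p - 1) * (p : ℂ) := by
          calc ∏ k ∈ Finset.Ico 1 p, (μ ^ k - 1)
              = ∏ k ∈ Finset.Ico 1 p, (-(1 - μ ^ k)) := by
                apply Finset.prod_congr rfl; intro k _; ring
            _ = (-1) ^ (p - 1) * ∏ k ∈ Finset.Ico 1 p, (1 - μ ^ k) := by
                rw [show (fun k => -(1 - μ ^ k)) = (fun k => (-1) * (1 - μ ^ k)) from
                  funext fun k => by ring]
                rw [Finset.prod_mul_distrib, Finset.prod_const, Nat.card_Ico]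
            _ = (-1) ^ (p - 1) * (p : ℂ) := by rw [prod_one_sub_pow_aux hp hμ]
        rw [hprod, hsum]
        ring
  have hmod : (F %ₘ ((X : ℤ[X]) ^ p - 1)).map (Int.castRingHom ℂ) = 0 := by
    rw [Polynomial.map_modByMonic _ hg]
    have h2 : (((X : ℤ[X]) ^ p - 1).map (Int.castRingHom ℂ)) = (X : ℂ[X]) ^ p - 1 := by
      simp [Polynomial.map_sub, Polynomial.map_pow, Polynomial.map_one]
    rw [h2, Polynomial.modByMonic_eq_zero_iff_dvd (by
      have := monic_X_pow_sub_C (1 : ℂ) hp.ne_zero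
      rwa [C_1] at this)]
    exact hdvd
  have hzero : F %ₘ ((X : ℤ[X]) ^ p - 1) = 0 := by
    have hinj : Function.Injective (Polynomial.map (Int.castRingHom ℂ)) :=
      Polynomial.map_injective _ Int.cast_injective
    apply hinj
    simpa using hmod
  rwa [← Polynomial.modByMonic_eq_zero_iff_dvd hg]

/-- The key one-variable identity in an arbitrary commutative ring:
if `c ^ p = 1` then `∏_{k=1}^{p-1} (c^k - 1) = (-1)^(p-1) (p - ∑_{j<p} c^j)`. -/
lemma prod_pow_sub_one_eq_aux {S : Type*} [CommRing S] (p : ℕ) (hp : p.Prime)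
    (c : S) (hc : c ^ p = 1) :
    ∏ k ∈ Finset.Ico 1 p, (c ^ k - 1)
      = (-1) ^ (p - 1) * ((p : S) - ∑ j ∈ range p, c ^ j) := by
  obtain ⟨q, hq⟩ := key_dvd_aux p hp
  have := congrArg (Polynomial.aeval c) hq
  simp only [map_sub, map_mul, map_pow, map_one, map_prod, map_sum, Polynomial.aeval_X,
    Polynomial.aeval_C, map_neg, map_natCast] at this
  rw [hc, sub_self, zero_mul] at this
  rw [sub_eq_zero] at this
  rw [this]

end Complex

section Phi

variable {S : Type*} [CommRing S] (p : ℕ) [NeZero p]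

/-- `φ(i,j) = aⁱ bʲ` on `(ℤ/p)²`. -/
def phiE (a b : S) (v : ZMod p × ZMod p) : S := a ^ v.1.val * b ^ v.2.val

variable (a b : S)

omit [NeZero p] in
lemma pow_mod_eq_aux (c : S) (hc : c ^ p = 1) (m : ℕ) : c ^ (m % p) = c ^ m := by
  conv_rhs => rw [← Nat.mod_add_div m p]
  rw [pow_add, pow_mul, hc, one_pow, mul_one]

variable (ha : a ^ p = 1) (hb : b ^ p = 1)

include ha hb in
lemma phiE_add (v w : ZMod p × ZMod p) : phiE p a b (v + w) = phiE p a b v * phiE p a b w := by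
  simp only [phiE, Prod.fst_add, Prod.snd_add, ZMod.val_add]
  rw [pow_mod_eq_aux p a ha, pow_mod_eq_aux p b hb, pow_add, pow_add]
  ring

omit [NeZero p] in
lemma phiE_zero : phiE p a b 0 = 1 := by simp [phiE, ZMod.val_zero]

include ha hb in
lemma phiE_smul (k : ZMod p) (v : ZMod p × ZMod p) :
    phiE p a b (k • v) = phiE p a b v ^ k.val := by
  simp only [phiE, Prod.smul_fst, Prod.smul_snd, smul_eq_mul, ZMod.val_mul]
  rw [pow_mod_eq_aux p a ha, pow_mod_eq_aux p b hb, mul_pow, ← pow_mul, ← pow_mul,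
    mul_comm k.val v.1.val, mul_comm k.val v.2.val]

omit [NeZero p] in
include ha hb in
lemma phiE_pow_p (v : ZMod p × ZMod p) : phiE p a b v ^ p = 1 := by
  simp only [phiE, mul_pow]
  rw [← pow_mul, ← pow_mul, mul_comm (v.1.val) p, mul_comm (v.2.val) p, pow_mul, pow_mul,
    ha, hb, one_pow, one_pow, mul_one]

end Phi

section Reindex

variable (p : ℕ) [NeZero p]

lemma zmod_prod_val_aux {β : Type*} [CommMonoid β] (f : ℕ → β) :
    ∏ k : ZMod p, f k.val = ∏ j ∈ range p, f j := by
  apply Finset.prod_nbij' (fun k : ZMod p => k.val) (fun n => (n : ZMod p))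
  · intro k _; exact Finset.mem_range.2 (ZMod.val_lt k)
  · intro n _; exact Finset.mem_univ _
  · intro k _; exact ZMod.natCast_rightInverse k
  · intro n hn; exact ZMod.val_cast_of_lt (Finset.mem_range.1 hn)
  · intro k _; rfl

lemma zmod_sum_val_aux {β : Type*} [AddCommMonoid β] (f : ℕ → β) :
    ∑ k : ZMod p, f k.val = ∑ j ∈ range p, f j :=
  zmod_prod_val_aux p (β := Multiplicative β) f

lemma zmod_prod_val_ne_aux {β : Type*} [CommMonoid β] (f : ℕ → β) :
    ∏ k ∈ (univ : Finset (ZMod p)).erase 0, f k.val = ∏ j ∈ Finset.Ico 1 p, f j := by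
  apply Finset.prod_nbij' (fun k : ZMod p => k.val) (fun n => (n : ZMod p))
  · intro k hk
    rw [Finset.mem_erase] at hk
    refine Finset.mem_Ico.2 ⟨?_, ZMod.val_lt k⟩
    rcases Nat.eq_zero_or_pos k.val with h | h
    · exact absurd ((ZMod.val_eq_zero k).1 h) hk.1
    · exact h
  · intro n hn
    rw [Finset.mem_Ico] at hn
    refine Finset.mem_erase.2 ⟨?_, Finset.mem_univ _⟩
    intro h
    exact Nat.not_dvd_of_pos_of_lt (by omega) hn.2 ((ZMod.natCast_eq_zero_iff n p).1 h)
  · intro k _; exact ZMod.natCast_rightInverse k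
  · intro n hn
    rw [Finset.mem_Ico] at hn
    exact ZMod.val_cast_of_lt hn.2
  · intro k _; rfl

end Reindex

section Cover

variable (p : ℕ) [Fact p.Prime]

/-- The `p+1` canonical directions in `(ℤ/p)²`. -/
def dirE (o : Option (ZMod p)) : ZMod p × ZMod p :=
  match o with
  | none => (0, 1)
  | some t => (1, t)

lemma smul_dir_ne_zero (o : Option (ZMod p)) (k : ZMod p) (hk : k ≠ 0) :
    k • dirE p o ≠ 0 := by
  match o with
  | none =>
    intro h
    exact hk (by simpa [dirE, Prod.smul_mk, smul_eq_mul] using congrArg Prod.snd h)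
  | some t =>
    intro h
    exact hk (by simpa [dirE, Prod.smul_mk, smul_eq_mul] using congrArg Prod.fst h)

/-- Products over the `p+1` punctured lines cover the punctured plane. -/
lemma cover_prod {β : Type*} [CommMonoid β] (f : ZMod p × ZMod p → β) :
    ∏ ok ∈ (univ : Finset (Option (ZMod p))) ×ˢ ((univ : Finset (ZMod p)).erase 0),
        f (ok.2 • dirE p ok.1)
      = ∏ v ∈ (univ : Finset (ZMod p × ZMod p)).erase 0, f v := by
  apply Finset.prod_nbij' (fun ok => ok.2 • dirE p ok.1)
    (fun v => if v.1 = 0 then (none, v.2) else (some (v.2 * v.1⁻¹), v.1))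
  · rintro ⟨o, k⟩ hok
    rw [Finset.mem_product, Finset.mem_erase] at hok
    exact Finset.mem_erase.2 ⟨smul_dir_ne_zero p o k hok.2.1, Finset.mem_univ _⟩
  · rintro ⟨v1, v2⟩ hv
    rw [Finset.mem_erase] at hv
    by_cases h1 : v1 = 0
    · subst h1
      have hv2 : v2 ≠ 0 := fun h => hv.1 (by simp [h, Prod.ext_iff])
      simp only [if_pos rfl]
      exact Finset.mem_product.2 ⟨Finset.mem_univ _, Finset.mem_erase.2 ⟨hv2, Finset.mem_univ _⟩⟩
    · simp only [if_neg h1]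
      exact Finset.mem_product.2 ⟨Finset.mem_univ _, Finset.mem_erase.2 ⟨h1, Finset.mem_univ _⟩⟩
  · rintro ⟨o, k⟩ hok
    rw [Finset.mem_product, Finset.mem_erase] at hok
    have hk : k ≠ 0 := hok.2.1
    match o with
    | none =>
      simp [dirE, Prod.ext_iff, smul_eq_mul]
    | some t =>
      simp only [dirE, Prod.smul_mk, smul_eq_mul, mul_one]
      rw [if_neg hk]
      have : k * t * k⁻¹ = t := by field_simp
      rw [this]
  · rintro ⟨v1, v2⟩ hv
    rw [Finset.mem_erase] at hv
    by_cases h1 : v1 = 0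
    · subst h1
      simp [dirE, Prod.ext_iff, smul_eq_mul]
    · simp only [if_neg h1, dirE, Prod.smul_mk, smul_eq_mul, mul_one]
      have : v1 * (v2 * v1⁻¹) = v2 := by field_simp
      rw [this]
  · intro ok hok
    rfl

/-- Additive version. -/
lemma cover_sum {β : Type*} [AddCommMonoid β] (f : ZMod p × ZMod p → β) :
    ∑ ok ∈ (univ : Finset (Option (ZMod p))) ×ˢ ((univ : Finset (ZMod p)).erase 0),
        f (ok.2 • dirE p ok.1)
      = ∑ v ∈ (univ : Finset (ZMod p × ZMod p)).erase 0, f v :=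
  cover_prod p (β := Multiplicative β) f

end Cover

section Lines

variable {S : Type*} [CommRing S] (p : ℕ) [Fact p.Prime] (a b : S)
  (ha : a ^ p = 1) (hb : b ^ p = 1)

/-- Sum over a line. -/
noncomputable def NlineE (v : ZMod p × ZMod p) : S := ∑ k : ZMod p, phiE p a b (k • v)

/-- Sum over the whole group. -/
noncomputable def ME : S := ∑ v : ZMod p × ZMod p, phiE p a b v

include ha hb

lemma M_mul_Nline (v : ZMod p × ZMod p) :
    ME p a b * NlineE p a b v = (p : S) * ME p a b := by
  rw [ME, NlineE, Finset.sum_mul_sum, Finset.sum_comm]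
  have h : ∀ k : ZMod p, ∑ u : ZMod p × ZMod p, phiE p a b u * phiE p a b (k • v)
      = ME p a b := by
    intro k
    have h1 : ∀ u, phiE p a b u * phiE p a b (k • v) = phiE p a b (u + k • v) := by
      intro u; rw [phiE_add p a b ha hb]
    simp_rw [h1]
    exact Fintype.sum_bijective _ (Equiv.addRight (k • v)).bijective _ _ (fun u => rfl)
  simp_rw [h]
  rw [Finset.sum_const, Finset.card_univ, ZMod.card, nsmul_eq_mul]
  rfl

/-- Independent lines multiply to the full sum. -/
lemma Nline_mul_Nline (v w : ZMod p × ZMod p)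
    (hdet : v.1 * w.2 - v.2 * w.1 ≠ 0) :
    NlineE p a b v * NlineE p a b w = ME p a b := by
  rw [NlineE, NlineE, Finset.sum_mul_sum]
  have h1 : ∀ k l : ZMod p, phiE p a b (k • v) * phiE p a b (l • w)
      = phiE p a b (k • v + l • w) := fun k l => (phiE_add p a b ha hb _ _).symm
  simp_rw [h1]
  rw [← Fintype.sum_prod_type']
  apply Fintype.sum_bijective (fun kl : ZMod p × ZMod p => kl.1 • v + kl.2 • w)
  · rw [Fintype.bijective_iff_injective_and_card]
    refine ⟨?_, rfl⟩
    rintro ⟨k, l⟩ ⟨k', l'⟩ h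
    have h1' : k * v.1 + l * w.1 = k' * v.1 + l' * w.1 := congrArg Prod.fst h
    have h2' : k * v.2 + l * w.2 = k' * v.2 + l' * w.2 := congrArg Prod.snd h
    have hk : (k - k') * (v.1 * w.2 - v.2 * w.1) = 0 := by
      linear_combination w.2 * h1' - w.1 * h2'
    have hk0 : k = k' := by
      rcases mul_eq_zero.1 hk with h' | h'
      · exact sub_eq_zero.1 h'
      · exact absurd h' hdet
    subst hk0
    have hl : (l - l') * (v.1 * w.2 - v.2 * w.1) = 0 := by
      linear_combination v.1 * h2' - v.2 * h1'
    have hl0 : l = l' := by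
      rcases mul_eq_zero.1 hl with h' | h'
      · exact sub_eq_zero.1 h'
      · exact absurd h' hdet
    rw [hl0]
  · intro kl
    rfl

omit ha hb in
/-- Any two distinct directions are independent. -/
lemma dir_det (o o' : Option (ZMod p)) (h : o ≠ o') :
    (dirE p o).1 * (dirE p o').2 - (dirE p o).2 * (dirE p o').1 ≠ 0 := by
  match o, o' with
  | none, none => exact absurd rfl h
  | none, some t => simp [dirE]
  | some t, none => simp [dirE]
  | some t, some t' =>
    simp only [dirE, one_mul, mul_one]
    intro hc
    exact h (by rw [sub_eq_zero] at hc; rw [hc])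

/-- The sum of the line sums. -/
lemma sum_Nline :
    ∑ o : Option (ZMod p), NlineE p a b (dirE p o) = ME p a b + (p : S) := by
  have hsplit : ∀ o : Option (ZMod p), NlineE p a b (dirE p o)
      = 1 + ∑ k ∈ (univ : Finset (ZMod p)).erase 0, phiE p a b (k • dirE p o) := by
    intro o
    rw [NlineE, ← Finset.add_sum_erase _ _ (Finset.mem_univ (0 : ZMod p)), zero_smul,
      phiE_zero]
  simp_rw [hsplit]
  rw [Finset.sum_add_distrib, Finset.sum_const, Finset.card_univ, Fintype.card_option,
    ZMod.card, nsmul_eq_mul, mul_one]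
  have hcov : ∑ o : Option (ZMod p), ∑ k ∈ (univ : Finset (ZMod p)).erase 0,
      phiE p a b (k • dirE p o)
      = ∑ v ∈ (univ : Finset (ZMod p × ZMod p)).erase 0, phiE p a b v := by
    rw [← Finset.sum_product' (s := (univ : Finset (Option (ZMod p))))
      (t := (univ : Finset (ZMod p)).erase 0)
      (f := fun o k => phiE p a b (k • dirE p o))]
    exact cover_sum p _
  rw [hcov, Finset.sum_erase_eq_sub (Finset.mem_univ _), phiE_zero]
  have hM : ∑ v : ZMod p × ZMod p, phiE p a b v = ME p a b := rfl
  rw [hM]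
  push_cast
  ring

end Lines

section Inv

variable {S : Type*} [CommRing S] {ι : Type*} [DecidableEq ι]

lemma prod_p_sub (p : ℕ) (x : ι → S) (M : S)
    (h1 : ∀ d d', d ≠ d' → x d * x d' = M)
    (h2 : ∀ d, M * x d = (p : S) * M) :
    ∀ (s : ℕ) (T : Finset ι), T.card = s + 2 →
      ∏ d ∈ T, ((p : S) - x d)
        = (p : S) ^ (s + 2) - (p : S) ^ (s + 1) * ∑ d ∈ T, x d
          + ((s + 1 : ℕ) : S) * (p : S) ^ s * M := by
  intro s
  induction s with
  | zero =>
    intro T hT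
    obtain ⟨d, e, hde, rfl⟩ := Finset.card_eq_two.1 hT
    rw [Finset.prod_pair hde, Finset.sum_pair hde]
    push_cast
    linear_combination h1 d e hde
  | succ n ih =>
    intro T hT
    have hne : T.Nonempty := by rw [← Finset.card_pos, hT]; omega
    obtain ⟨d, hd⟩ := hne
    have hT' : (T.erase d).card = n + 2 := by rw [Finset.card_erase_of_mem hd, hT]; omega
    rw [← Finset.insert_erase hd, Finset.prod_insert (Finset.notMem_erase d T),
      Finset.sum_insert (Finset.notMem_erase d T), ih _ hT']
    have hxa : x d * ∑ e ∈ T.erase d, x e = ((n + 2 : ℕ) : S) * M := by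
      rw [Finset.mul_sum,
        Finset.sum_congr rfl (fun e he => h1 d e (Finset.ne_of_mem_erase he).symm),
        Finset.sum_const, hT', nsmul_eq_mul]
    have hMa : M * x d = (p : S) * M := h2 d
    push_cast at hxa ⊢
    linear_combination ((p : S)) ^ (n + 1) * hxa - ((n : S) + 1) * ((p : S)) ^ n * hMa

end Inv

/-- The product of all Euler classes vanishes in any commutative ring with two
`p`-th roots of unity. -/
theorem euler_prod_zero {S : Type*} [CommRing S] (p : ℕ) [Fact p.Prime] (a b : S)
    (ha : a ^ p = 1) (hb : b ^ p = 1) :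
    ∏ v ∈ (univ : Finset (ZMod p × ZMod p)).erase 0, (phiE p a b v - 1) = 0 := by
  have hp : p.Prime := Fact.out
  rw [← cover_prod p (fun v => phiE p a b v - 1), Finset.prod_product]
  have hinner : ∀ o : Option (ZMod p),
      ∏ k ∈ (univ : Finset (ZMod p)).erase 0, (phiE p a b (k • dirE p o) - 1)
      = (-1) ^ (p - 1) * ((p : S) - NlineE p a b (dirE p o)) := by
    intro o
    have hc : phiE p a b (dirE p o) ^ p = 1 := phiE_pow_p p a b ha hb _
    calc ∏ k ∈ (univ : Finset (ZMod p)).erase 0, (phiE p a b (k • dirE p o) - 1)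
        = ∏ k ∈ (univ : Finset (ZMod p)).erase 0, (phiE p a b (dirE p o) ^ k.val - 1) := by
          apply Finset.prod_congr rfl; intro k _; rw [phiE_smul p a b ha hb]
      _ = ∏ n ∈ Finset.Ico 1 p, (phiE p a b (dirE p o) ^ n - 1) :=
          zmod_prod_val_ne_aux p (fun n => phiE p a b (dirE p o) ^ n - 1)
      _ = (-1) ^ (p - 1) * ((p : S) - ∑ j ∈ range p, phiE p a b (dirE p o) ^ j) :=
          prod_pow_sub_one_eq_aux p hp _ hc
      _ = (-1) ^ (p - 1) * ((p : S) - NlineE p a b (dirE p o)) := by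
          congr 2
          rw [NlineE, ← zmod_sum_val_aux p (fun n => phiE p a b (dirE p o) ^ n)]
          apply Finset.sum_congr rfl
          intro k _
          rw [phiE_smul p a b ha hb]
  simp_rw [hinner]
  rw [Finset.prod_mul_distrib, Finset.prod_const]
  have hmain : ∏ o : Option (ZMod p), ((p : S) - NlineE p a b (dirE p o)) = 0 := by
    have h2 := hp.two_le
    have hq : (p - 1) + 2 = p + 1 := by omega
    have hq1 : (p - 1) + 1 = p := by omega
    have hcard : (univ : Finset (Option (ZMod p))).card = (p - 1) + 2 := by
      rw [Finset.card_univ, Fintype.card_option, ZMod.card, hq]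
    rw [prod_p_sub p (fun o => NlineE p a b (dirE p o)) (ME p a b)
      (fun d d' hdd => Nline_mul_Nline p a b ha hb _ _ (dir_det p d d' hdd))
      (fun d => M_mul_Nline p a b ha hb _) (p - 1) univ hcard]
    rw [sum_Nline p a b ha hb, hq, hq1]
    have hpp : (p : S) * (p : S) ^ (p - 1) = (p : S) ^ p := by
      rw [← pow_succ', hq1]
    rw [hpp]
    ring
  rw [hmain, mul_zero]

end AuxEuler

/-- Complex `K`-theory localized at `p` is not `ℤ/p × ℤ/p`-sensitive: the
localization of `K^0_(p)(B(ℤ/p × ℤ/p))` at the Euler classes is the zero ring. -/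
theorem localization_ZpZp_subsingleton (p : ℕ) [Fact p.Prime] :
    Subsingleton (Localization (eulerSubmonoidZpZp p)) := by
  have hp : p.Prime := Fact.out
  set I : Ideal (ZpXY p) := Ideal.span
    {(1 + MvPowerSeries.X 0 : ZpXY p) ^ p - 1,
     (1 + MvPowerSeries.X 1 : ZpXY p) ^ p - 1} with hI
  let mk : ZpXY p →+* KZpZp p := Ideal.Quotient.mk I
  have ha : (mk (1 + MvPowerSeries.X 0)) ^ p = 1 := by
    rw [← map_pow, ← map_one mk]
    apply Ideal.Quotient.eq.2
    exact Ideal.subset_span (by left; rfl)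
  have hb : (mk (1 + MvPowerSeries.X 1)) ^ p = 1 := by
    rw [← map_pow, ← map_one mk]
    apply Ideal.Quotient.eq.2
    exact Ideal.subset_span (by right; rfl)
  have h0 : (0 : KZpZp p) ∈ eulerSubmonoidZpZp p := by
    rw [← euler_prod_zero p (mk (1 + MvPowerSeries.X 0)) (mk (1 + MvPowerSeries.X 1)) ha hb]
    apply Submonoid.prod_mem
    intro v hv
    apply Submonoid.subset_closure
    have hvne : v ≠ 0 := (Finset.mem_erase.1 hv).1
    refine ⟨(v.1.val, v.2.val), ⟨?_, ?_, ?_⟩, ?_⟩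
    · have := ZMod.val_lt v.1; omega
    · have := ZMod.val_lt v.2; omega
    · intro h
      rw [Prod.mk.injEq] at h
      exact hvne (Prod.ext ((ZMod.val_eq_zero v.1).1 h.1) ((ZMod.val_eq_zero v.2).1 h.2))
    · show mk _ = _
      rw [map_sub, map_mul, map_pow, map_pow, map_one]
      rfl
  exact IsLocalization.subsingleton (M := eulerSubmonoidZpZp p)
    (S := Localization (eulerSubmonoidZpZp p)) h0
end

section
/- Let T : (Fin 3 → ℂ) → (Fin 3 → ℂ) be the map (x₀, x₁, x₂) ↦ (conj x₀, −conj x₂, conj x₁). There exists a unique map σ from the complex projective plane ℙ(ℂ, Fin 3 → ℂ) to itself such that σ([v]) = [T v] for every nonzero vector v; this σ satisfies σ ∘ σ ∘ σ ∘ σ = id but σ ∘ σ ≠ id (σ has order exactly 4, so it generates an action of ℤ/4 on ℂP²). -/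
open scoped LinearAlgebra.Projectivization

/-- The conjugate-linear map `(x₀, x₁, x₂) ↦ (conj x₀, −conj x₂, conj x₁)` on `ℂ³`. -/
noncomputable def T : (Fin 3 → ℂ) → (Fin 3 → ℂ) :=
  fun x => ![(starRingEnd ℂ) (x 0), -(starRingEnd ℂ) (x 2), (starRingEnd ℂ) (x 1)]

lemma T_ne {v : Fin 3 → ℂ} (hv : v ≠ 0) : T v ≠ 0 := by
  intro h
  apply hv
  have h0 := congrFun h 0
  have h1 := congrFun h 1
  have h2 := congrFun h 2
  simp [T] at h0 h1 h2
  funext i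
  fin_cases i <;> simp [h0, h1, h2]

lemma T_smul (c : ℂ) (v : Fin 3 → ℂ) : T (c • v) = (starRingEnd ℂ c) • T v := by
  funext i
  fin_cases i <;> simp [T, mul_comm]

lemma TT (v : Fin 3 → ℂ) : T (T (T (T v))) = v := by
  funext i
  fin_cases i <;> simp [T]

noncomputable def sig : ℙ ℂ (Fin 3 → ℂ) → ℙ ℂ (Fin 3 → ℂ) :=
  fun p => Projectivization.mk ℂ (T p.rep) (T_ne p.rep_nonzero)

lemma sig_mk (v : Fin 3 → ℂ) (hv : v ≠ 0) :
    sig (Projectivization.mk ℂ v hv) = Projectivization.mk ℂ (T v) (T_ne hv) := by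
  obtain ⟨a, ha⟩ := (Projectivization.mk_eq_mk_iff ℂ _ _ _ hv).1
    (Projectivization.mk_rep (Projectivization.mk ℂ v hv))
  unfold sig
  rw [Projectivization.mk_eq_mk_iff]
  refine ⟨Units.map (starRingEnd ℂ).toMonoidHom a, ?_⟩
  have : ((Units.map (starRingEnd ℂ).toMonoidHom a : ℂˣ) : ℂ) • T v
      = T ((a : ℂ) • v) := by rw [T_smul]; rfl
  rw [Units.smul_def, this]
  rw [← ha, Units.smul_def]

/-- There is a unique self-map `σ` of `ℂP²` with `σ([v]) = [T v]` for all nonzero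
`v`; it satisfies `σ ∘ σ ∘ σ ∘ σ = id` but `σ ∘ σ ≠ id`, so it generates an action
of `ℤ/4` on `ℂP²`. -/
theorem exists_unique_order_four_action :
    ∃ σ : ℙ ℂ (Fin 3 → ℂ) → ℙ ℂ (Fin 3 → ℂ),
      (∀ (v : Fin 3 → ℂ) (hv : v ≠ 0) (hTv : T v ≠ 0),
        σ (Projectivization.mk ℂ v hv) = Projectivization.mk ℂ (T v) hTv) ∧
      (∀ σ' : ℙ ℂ (Fin 3 → ℂ) → ℙ ℂ (Fin 3 → ℂ),
        (∀ (v : Fin 3 → ℂ) (hv : v ≠ 0) (hTv : T v ≠ 0),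
          σ' (Projectivization.mk ℂ v hv) = Projectivization.mk ℂ (T v) hTv) →
        σ' = σ) ∧
      σ ∘ σ ∘ σ ∘ σ = id ∧ σ ∘ σ ≠ id := by
  refine ⟨sig, fun v hv hTv => sig_mk v hv, ?_, ?_, ?_⟩
  · intro σ' h
    funext p
    induction p using Projectivization.ind with
    | h v hv => rw [h v hv (T_ne hv), sig_mk]
  · funext p
    induction p using Projectivization.ind with
    | h v hv =>
      simp only [Function.comp_apply, id_eq, sig_mk]
      rw [Projectivization.mk_eq_mk_iff]
      exact ⟨1, by simp [TT]⟩
  · intro h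
    have hv : (![1, 1, 0] : Fin 3 → ℂ) ≠ 0 := by
      intro h'
      have := congrFun h' 0
      simp at this
    have := congrFun h (Projectivization.mk ℂ ![1, 1, 0] hv)
    simp only [Function.comp_apply, id_eq, sig_mk] at this
    rw [Projectivization.mk_eq_mk_iff] at this
    obtain ⟨a, ha⟩ := this
    have h0 := congrFun ha 0
    have h1 := congrFun ha 1
    simp [T] at h0 h1
    rw [h0] at h1
    norm_num at h1
end
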